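/- arXiv:1210.4745 — 2 statements merged into one kernel-verified Lean document; each statement's English description precedes it below -/
import Mathlib

section
/- Let f = −((1/2) f_1 + (1/(K+2)) f_2) + K/2 on V_K. Then the scalar product of A with the gradient field ∇f equals ⟨A, ∇f⟩ = K/(K+2). -/
open Finset MeasureTheory Filter

namespace CRW

/-- The vertex set `V_K = {-1,1}^K ⊆ ℤ^K`. -/
def V (K : ℕ) : Finset (Fin K → ℤ) :=
  Fintype.piFinset fun _ => ({-1, 1} : Finset ℤ)

/-- The nonzero entries of `b - a`, read in order of increasing index, alternate in sign,
the first nonzero entry being negative (the `c`-th nonzero entry, `0`-indexed, equals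
`2 * (-1)^(c+1)`; in particular all entries lie in `{-2,0,2}`). -/
def AltNeg (K : ℕ) (a b : Fin K → ℤ) : Prop :=
  ∀ i : Fin K, b i - a i ≠ 0 →
    b i - a i =
      2 * (-1 : ℤ) ^ (((Finset.univ.filter fun j : Fin K => j < i ∧ b j - a j ≠ 0)).card + 1)

/-- Same with the first nonzero entry positive. -/
def AltPos (K : ℕ) (a b : Fin K → ℤ) : Prop :=
  ∀ i : Fin K, b i - a i ≠ 0 →
    b i - a i =
      2 * (-1 : ℤ) ^ ((Finset.univ.filter fun j : Fin K => j < i ∧ b j - a j ≠ 0)).card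

instance (K : ℕ) (a b : Fin K → ℤ) : Decidable (AltNeg K a b) := by
  unfold AltNeg; infer_instance

instance (K : ℕ) (a b : Fin K → ℤ) : Decidable (AltPos K a b) := by
  unfold AltPos; infer_instance

/-- The set `E_K^+` of positive edges: couples `(a,b)` of vertices with `a ≠ b` whose
difference has nonzero entries of alternating signs, the first one negative; together
with one (positive) loop `(a,a)` at every vertex. -/
def Eplus (K : ℕ) : Finset ((Fin K → ℤ) × (Fin K → ℤ)) :=
  ((V K) ×ˢ (V K)).filter fun p => p.1 = p.2 ∨ AltNeg K p.1 p.2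

/-- The set `E_K^-` of negative edges, with one (negative) loop at every vertex. -/
def Eminus (K : ℕ) : Finset ((Fin K → ℤ) × (Fin K → ℤ)) :=
  ((V K) ×ˢ (V K)).filter fun p => p.1 = p.2 ∨ AltPos K p.1 p.2

/-- Type of signed edges: the Boolean records whether the edge is positive. -/
abbrev Edge (K : ℕ) := Bool × ((Fin K → ℤ) × (Fin K → ℤ))

/-- `E_K = E_K^+ ⊔ E_K^-` as a disjoint union (positive edges tagged `true`). -/
def EK (K : ℕ) : Finset (Edge K) :=
  (Eplus K).image (fun p => (true, p)) ∪ (Eminus K).image (fun p => (false, p))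

/-- The vector field `A`, equal to `+1` on `E_K^+` and `-1` on `E_K^-`. -/
noncomputable def A (K : ℕ) : Edge K → ℝ := fun e => if e.1 then 1 else -1

/-- `α_k(a)`: the number of `b` with `(a,b) ∈ E_K^+` differing from `a` in exactly `k`
coordinates. -/
def alphaK (K k : ℕ) (a : Fin K → ℤ) : ℕ :=
  ((V K).filter fun b =>
    (a, b) ∈ Eplus K ∧ (Finset.univ.filter fun i : Fin K => b i ≠ a i).card = k).card

/-- `ᾱ_k(a)`: the number of `b` with `(a,b) ∈ E_K^-` differing from `a` in exactly `k`
coordinates. -/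
def abarK (K k : ℕ) (a : Fin K → ℤ) : ℕ :=
  ((V K).filter fun b =>
    (a, b) ∈ Eminus K ∧ (Finset.univ.filter fun i : Fin K => b i ≠ a i).card = k).card

/-- `α_ev(a) = Σ_{k even} α_k(a)`. -/
def alphaEv (K : ℕ) (a : Fin K → ℤ) : ℕ :=
  ∑ k ∈ (Finset.range (K + 1)).filter (fun k => Even k), alphaK K k a

/-- `α_od(a) = Σ_{k odd} α_k(a)`. -/
def alphaOd (K : ℕ) (a : Fin K → ℤ) : ℕ :=
  ∑ k ∈ (Finset.range (K + 1)).filter (fun k => Odd k), alphaK K k a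

/-- `ᾱ_ev(a) = Σ_{k even} ᾱ_k(a)`. -/
def abarEv (K : ℕ) (a : Fin K → ℤ) : ℕ :=
  ∑ k ∈ (Finset.range (K + 1)).filter (fun k => Even k), abarK K k a

/-- `ᾱ_od(a) = Σ_{k odd} ᾱ_k(a)`. -/
def abarOd (K : ℕ) (a : Fin K → ℤ) : ℕ :=
  ∑ k ∈ (Finset.range (K + 1)).filter (fun k => Odd k), abarK K k a

/-- `ᾱ(a) = Σ_{k=0}^K ᾱ_k(a)`. -/
def abarTot (K : ℕ) (a : Fin K → ℤ) : ℕ := ∑ k ∈ Finset.range (K + 1), abarK K k a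

/-- `f_1(a) = Σ_i a_i`. -/
def f1 (K : ℕ) (a : Fin K → ℤ) : ℤ := ∑ i : Fin K, a i

/-- `f_2(a) = α_2(a) - ᾱ_2(a)`. -/
def f2 (K : ℕ) (a : Fin K → ℤ) : ℤ := (alphaK K 2 a : ℤ) - (abarK K 2 a : ℤ)

/-- `φ(a) = Σ_{(a,b) ∈ E_K^+} (f_2(b) - f_2(a))` (loops included; they contribute `0`). -/
def phi (K : ℕ) (a : Fin K → ℤ) : ℤ :=
  ∑ p ∈ (Eplus K).filter (fun p => p.1 = a), (f2 K p.2 - f2 K p.1)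

/-- `φ̄(a) = Σ_{(a,b) ∈ E_K^-} (f_2(b) - f_2(a))`. -/
def phibar (K : ℕ) (a : Fin K → ℤ) : ℤ :=
  ∑ p ∈ (Eminus K).filter (fun p => p.1 = a), (f2 K p.2 - f2 K p.1)

/-- The gradient vector field of a function `f` on the vertices:
`∇f(a,b) = f(b) - f(a)` (it vanishes on loops). -/
noncomputable def gradE (K : ℕ) (f : (Fin K → ℤ) → ℝ) : Edge K → ℝ := fun e => f e.2.2 - f e.2.1

/-- Divergence of a vector field at a vertex: the sum of its values over all edges of
`E_K` leaving that vertex, loops included. -/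
noncomputable def divE (K : ℕ) (S : Edge K → ℝ) (a : Fin K → ℤ) : ℝ :=
  ∑ e ∈ (EK K).filter (fun e => e.2.1 = a), S e

/-- Scalar product `⟨S,S'⟩ = (1/D_K) Σ_{e ∈ E_K} S(e) S'(e)` with `D_K = Card E_K`. -/
noncomputable def innerE (K : ℕ) (S S' : Edge K → ℝ) : ℝ :=
  (∑ e ∈ EK K, S e * S' e) / ((EK K).card : ℝ)

/-- A vector field on `G_K`: antisymmetric on non-loop edges (reversing a non-loop edge
of `E_K` yields again an edge of `E_K`, with the opposite sign), with opposite values on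
the two loops at each vertex. -/
def IsVectorField (K : ℕ) (S : Edge K → ℝ) : Prop :=
  (∀ e ∈ EK K, ∀ e' ∈ EK K, e.2.1 ≠ e.2.2 → e'.2.1 = e.2.2 → e'.2.2 = e.2.1 →
    S e = - S e') ∧
  (∀ a : Fin K → ℤ, (true, (a, a)) ∈ EK K → S (true, (a, a)) = - S (false, (a, a)))

/-- The state space `𝒮_K` of `K`-step walks in `ℤ`. -/
def SK (K : ℕ) : Set (Fin (K + 1) → ℤ) :=
  {z | ∀ i : Fin K, |z i.succ - z i.castSucc| = 1}

/-- `w` is a possible next position for the constrained walk at `z`. -/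
def Adjacent (K : ℕ) (z w : Fin (K + 1) → ℤ) : Prop :=
  w ∈ SK K ∧ ∀ i : Fin (K + 1), |w i - z i| = 1

/-- The shape map `δ(z) = (z⁽²⁾ - z⁽¹⁾, …, z⁽ᴷ⁺¹⁾ - z⁽ᴷ⁾)`. -/
def deltaS (K : ℕ) (z : Fin (K + 1) → ℤ) : Fin K → ℤ :=
  fun i => z i.succ - z i.castSucc

end CRW

namespace CRWAux
open CRW Finset

variable {K : ℕ}

lemma fin3 (v : Fin 3) : v = 0 ∨ v = 1 ∨ v = 2 := by omega

lemma mem_V {a : Fin K → ℤ} : a ∈ V K ↔ ∀ i, a i = -1 ∨ a i = 1 := by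
  simp [V, Fintype.mem_piFinset]

/-- number-of-1s-below counter -/
def cnt (K : ℕ) (c : Fin K → Fin 3) (i : Fin K) : ℕ :=
  (univ.filter fun j => j < i ∧ c j = 1).card

def sgn (K : ℕ) (c : Fin K → Fin 3) (i : Fin K) : ℤ := (-1) ^ cnt K c i

lemma sgn_cases (c : Fin K → Fin 3) (i : Fin K) : sgn K c i = 1 ∨ sgn K c i = -1 :=
  (Nat.even_or_odd (cnt K c i)).imp (fun h => h.neg_one_pow) (fun h => h.neg_one_pow)

def encA (K : ℕ) (c : Fin K → Fin 3) : Fin K → ℤ :=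
  fun i => if c i = 2 then -sgn K c i else sgn K c i

def encB (K : ℕ) (c : Fin K → Fin 3) : Fin K → ℤ :=
  fun i => if c i = 1 then -sgn K c i else encA K c i

lemma encA_mem (c : Fin K → Fin 3) : encA K c ∈ V K := by
  rw [mem_V]; intro i
  unfold encA
  rcases sgn_cases c i with h | h <;> rw [h] <;> split <;> simp

lemma encB_mem (c : Fin K → Fin 3) : encB K c ∈ V K := by
  rw [mem_V]; intro i
  unfold encB
  split
  · rcases sgn_cases c i with h | h <;> rw [h] <;> simp
  · exact mem_V.mp (encA_mem c) i

lemma enc_diff (c : Fin K → Fin 3) (i : Fin K) :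
    encB K c i - encA K c i = if c i = 1 then -2 * sgn K c i else 0 := by
  unfold encB encA
  rcases fin3 (c i) with h | h | h <;> simp [h] <;> ring

end CRWAux
namespace CRWAux
open CRW Finset

variable {K : ℕ}

lemma sgn_ne_neg (c : Fin K → Fin 3) (i : Fin K) : sgn K c i ≠ -sgn K c i := by
  rcases sgn_cases c i with h | h <;> rw [h] <;> norm_num

lemma enc_flip_iff (c : Fin K → Fin 3) (i : Fin K) :
    encB K c i - encA K c i ≠ 0 ↔ c i = 1 := by
  rw [enc_diff]
  rcases sgn_cases c i with h | h <;> rw [h] <;> split <;> simp_all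

lemma enc_cnt (c : Fin K → Fin 3) (i : Fin K) :
    (univ.filter fun j : Fin K => j < i ∧ encB K c j - encA K c j ≠ 0).card = cnt K c i := by
  unfold cnt
  congr 1
  apply filter_congr
  intro j _
  simp [enc_flip_iff]

lemma enc_altNeg (c : Fin K → Fin 3) : AltNeg K (encA K c) (encB K c) := by
  intro i hi
  rw [enc_cnt, enc_diff, if_pos ((enc_flip_iff c i).mp hi)]
  unfold sgn
  ring

lemma enc_mem_Eplus (c : Fin K → Fin 3) : (encA K c, encB K c) ∈ Eplus K := by
  unfold Eplus
  rw [mem_filter, mem_product]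
  exact ⟨⟨encA_mem c, encB_mem c⟩, Or.inr (enc_altNeg c)⟩

lemma enc_injective : Function.Injective (fun c : Fin K → Fin 3 => (encA K c, encB K c)) := by
  intro c c' h
  rw [Prod.mk.injEq] at h
  obtain ⟨hA, hB⟩ := h
  have key : ∀ n : ℕ, ∀ i : Fin K, i.val = n → c i = c' i := by
    intro n
    induction n using Nat.strong_induction_on with
    | _ n ihn =>
    intro i hin
    have ih : ∀ j : Fin K, j < i → c j = c' j := fun j hj =>
      ihn j.val (hin ▸ hj) j rfl
    have hcnt : cnt K c i = cnt K c' i := by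
      unfold cnt; congr 1; apply filter_congr; intro j _; simp only [and_congr_right_iff]
      intro hj; rw [ih j hj]
    have hs : sgn K c i = sgn K c' i := by unfold sgn; rw [hcnt]
    have h1 : encA K c i = encA K c' i := congrFun hA i
    have h2 : encB K c i = encB K c' i := congrFun hB i
    have h3 : encB K c i - encA K c i = encB K c' i - encA K c' i := by rw [h1, h2]
    rw [enc_diff, enc_diff, hs] at h3
    unfold encA at h1
    rw [hs] at h1
    rcases sgn_cases c' i with h | h <;> rw [h] at h3 h1 <;>
      rcases fin3 (c i) with hc | hc | hc <;> rcases fin3 (c' i) with hc' | hc' | hc' <;>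
      simp [hc, hc'] at h3 h1 ⊢ <;> omega
  funext i
  exact key i.val i rfl
end CRWAux
namespace CRWAux
open CRW Finset

variable {K : ℕ}

lemma altNeg_of_eq {a : Fin K → ℤ} : AltNeg K a a := by
  intro i hi; simp at hi

lemma mem_Eplus_iff {a b : Fin K → ℤ} :
    (a, b) ∈ Eplus K ↔ a ∈ V K ∧ b ∈ V K ∧ AltNeg K a b := by
  unfold Eplus
  rw [mem_filter, mem_product]
  constructor
  · rintro ⟨⟨ha, hb⟩, h | h⟩
    · obtain rfl : a = b := h
      exact ⟨ha, hb, altNeg_of_eq⟩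
    · exact ⟨ha, hb, h⟩
  · rintro ⟨ha, hb, h⟩; exact ⟨⟨ha, hb⟩, Or.inr h⟩

lemma enc_surj {p : (Fin K → ℤ) × (Fin K → ℤ)} (hp : p ∈ Eplus K) :
    ∃ c : Fin K → Fin 3, (encA K c, encB K c) = p := by
  obtain ⟨a, b⟩ := p
  obtain ⟨ha, hb, halt⟩ := mem_Eplus_iff.mp hp
  set flc : Fin K → ℕ :=
    fun i => (univ.filter fun j : Fin K => j < i ∧ b j - a j ≠ 0).card with hflc
  refine ⟨fun i => if b i - a i ≠ 0 then 1 else if a i = (-1) ^ flc i then 0 else 2, ?_⟩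
  set c : Fin K → Fin 3 :=
    fun i => if b i - a i ≠ 0 then 1 else if a i = (-1) ^ flc i then 0 else 2 with hc
  have hc1 : ∀ j, c j = 1 ↔ b j - a j ≠ 0 := by
    intro j
    by_cases h : b j - a j ≠ 0
    · simp [hc, h]
    · by_cases h2 : a j = (-1) ^ flc j <;> simp [hc, h, h2]
  have hcnt : ∀ i, cnt K c i = flc i := by
    intro i
    unfold cnt
    congr 1
    apply filter_congr
    intro j _
    simp [hc1 j]
  have hsgn : ∀ i, sgn K c i = (-1) ^ flc i := by
    intro i; unfold sgn; rw [hcnt]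
  have hval : ∀ i, a i = -1 ∨ a i = 1 := mem_V.mp ha
  have hvalb : ∀ i, b i = -1 ∨ b i = 1 := mem_V.mp hb
  have hflip : ∀ i, b i - a i ≠ 0 → b i = -a i := by
    intro i hi
    rcases hval i with h | h <;> rcases hvalb i with h' | h' <;> omega
  have haeq : ∀ i, b i - a i ≠ 0 → a i = (-1) ^ flc i := by
    intro i hi
    have hd : b i - a i = 2 * (-1) ^ (flc i + 1) := halt i hi
    rw [hflip i hi] at hd
    rcases Nat.even_or_odd (flc i) with he | he <;>
      simp only [pow_succ, he.neg_one_pow] at hd ⊢ <;> omega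
  rw [Prod.mk.injEq]
  constructor
  · funext i
    unfold encA
    rw [hsgn]
    by_cases hbi : b i - a i ≠ 0
    · have hci : c i = 1 := by simp only [hc]; rw [if_pos hbi]
      rw [hci, if_neg (by decide : ¬ ((1:Fin 3) = 2))]
      exact (haeq i hbi).symm
    · by_cases h2 : a i = (-1) ^ flc i
      · have hci : c i = 0 := by simp only [hc]; rw [if_neg hbi, if_pos h2]
        rw [hci, if_neg (by decide : ¬ ((0:Fin 3) = 2)), h2]
      · have hci : c i = 2 := by simp only [hc]; rw [if_neg hbi, if_neg h2]
        rw [hci, if_pos rfl]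
        rcases hval i with h | h <;>
          rcases Nat.even_or_odd (flc i) with he | he <;>
          simp [he.neg_one_pow] at h2 ⊢ <;> omega
  · funext i
    unfold encB encA
    rw [hsgn]
    by_cases hbi : b i - a i ≠ 0
    · have hci : c i = 1 := by simp only [hc]; rw [if_pos hbi]
      rw [hci, if_pos rfl, hflip i hbi, haeq i hbi]
    · have hba : b i = a i := by omega
      by_cases h2 : a i = (-1) ^ flc i
      · have hci : c i = 0 := by simp only [hc]; rw [if_neg hbi, if_pos h2]
        rw [hci, if_neg (by decide : ¬ ((0:Fin 3) = 1)),
          if_neg (by decide : ¬ ((0:Fin 3) = 2)), hba, h2]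
      · have hci : c i = 2 := by simp only [hc]; rw [if_neg hbi, if_neg h2]
        rw [hci, if_neg (by decide : ¬ ((2:Fin 3) = 1)), if_pos rfl, hba]
        rcases hval i with h | h <;>
          rcases Nat.even_or_odd (flc i) with he | he <;>
          simp [he.neg_one_pow] at h2 ⊢ <;> omega

lemma Eplus_eq_image :
    Eplus K = Finset.image (fun c : Fin K → Fin 3 => (encA K c, encB K c)) Finset.univ := by
  ext p
  rw [mem_image]
  constructor
  · intro hp
    obtain ⟨c, hcp⟩ := enc_surj hp
    exact ⟨c, mem_univ c, hcp⟩
  · rintro ⟨c, -, rfl⟩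
    exact enc_mem_Eplus c

lemma card_Eplus : (Eplus K).card = 3 ^ K := by
  rw [Eplus_eq_image, Finset.card_image_of_injective _ enc_injective]
  simp

end CRWAux
namespace CRWAux
open CRW Finset

variable {K : ℕ}

lemma neg_mem_V {a : Fin K → ℤ} (ha : a ∈ V K) : (-a) ∈ V K := by
  rw [mem_V] at ha ⊢
  intro i
  rcases ha i with h | h <;> simp [Pi.neg_apply, h]

lemma altPos_neg_iff {a b : Fin K → ℤ} : AltPos K (-a) (-b) ↔ AltNeg K a b := by
  unfold AltPos AltNeg
  have hfil : ∀ i : Fin K,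
      (univ.filter fun j : Fin K => j < i ∧ (-b) j - (-a) j ≠ 0) =
      (univ.filter fun j : Fin K => j < i ∧ b j - a j ≠ 0) := by
    intro i
    apply filter_congr
    intro j _
    simp only [Pi.neg_apply, and_congr_right_iff]
    intro _
    omega
  constructor
  · intro h i hi
    have h2 := h i (by simp only [Pi.neg_apply]; omega)
    rw [hfil i] at h2
    simp only [Pi.neg_apply] at h2
    rw [pow_succ]
    omega
  · intro h i hi
    simp only [Pi.neg_apply] at hi
    have h2 := h i (by omega)
    rw [hfil i, pow_succ] at *
    simp only [Pi.neg_apply]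
    omega

lemma mem_Eminus_iff {a b : Fin K → ℤ} :
    (a, b) ∈ Eminus K ↔ a ∈ V K ∧ b ∈ V K ∧ AltPos K a b := by
  unfold Eminus
  rw [mem_filter, mem_product]
  constructor
  · rintro ⟨⟨ha, hb⟩, h | h⟩
    · obtain rfl : a = b := h
      refine ⟨ha, hb, fun i hi => by simp at hi⟩
    · exact ⟨ha, hb, h⟩
  · rintro ⟨ha, hb, h⟩; exact ⟨⟨ha, hb⟩, Or.inr h⟩

lemma Eminus_eq_image :
    Eminus K = Finset.image (fun p : (Fin K → ℤ) × (Fin K → ℤ) => (-p.1, -p.2)) (Eplus K) := by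
  ext p
  rw [mem_image]
  constructor
  · intro hp
    obtain ⟨a, b⟩ := p
    obtain ⟨ha, hb, h⟩ := mem_Eminus_iff.mp hp
    refine ⟨(-a, -b), ?_, by simp⟩
    rw [mem_Eplus_iff]
    refine ⟨neg_mem_V ha, neg_mem_V hb, ?_⟩
    rw [← altPos_neg_iff]
    simpa using h
  · rintro ⟨⟨a, b⟩, hq, rfl⟩
    obtain ⟨ha, hb, h⟩ := mem_Eplus_iff.mp hq
    rw [mem_Eminus_iff]
    exact ⟨neg_mem_V ha, neg_mem_V hb, altPos_neg_iff.mpr h⟩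

lemma neg_pair_injective :
    Function.Injective (fun p : (Fin K → ℤ) × (Fin K → ℤ) => (-p.1, -p.2)) := by
  intro p q h
  rw [Prod.mk.injEq] at h
  obtain ⟨h1, h2⟩ := h
  have := congrArg Neg.neg h1
  have := congrArg Neg.neg h2
  simp only [neg_neg] at *
  exact Prod.ext (by assumption) (by assumption)

lemma card_Eminus : (Eminus K).card = 3 ^ K := by
  rw [Eminus_eq_image, Finset.card_image_of_injective _ neg_pair_injective, card_Eplus]

lemma card_EK : (EK K).card = 2 * 3 ^ K := by
  unfold EK
  rw [Finset.card_union_of_disjoint]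
  · rw [Finset.card_image_of_injective _ (fun p q h => by simpa using h),
      Finset.card_image_of_injective _ (fun p q h => by simpa using h),
      card_Eplus, card_Eminus]
    ring
  · simp [Finset.disjoint_left]

end CRWAux
namespace CRWAux
open CRW Finset

variable {K : ℕ}

def flip2 (a : Fin K → ℤ) (i j : Fin K) : Fin K → ℤ :=
  fun k => if k = i ∨ k = j then -a k else a k

def Pa (K : ℕ) (a : Fin K → ℤ) : Finset (Fin K × Fin K) :=
  (univ ×ˢ univ).filter fun q : Fin K × Fin K => q.1 < q.2 ∧ a q.1 = 1 ∧ a q.2 = -1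

def Qa (K : ℕ) (a : Fin K → ℤ) : Finset (Fin K × Fin K) :=
  (univ ×ˢ univ).filter fun q : Fin K × Fin K => q.1 < q.2 ∧ a q.1 = -1 ∧ a q.2 = 1

lemma flip2_ne_iff {a : Fin K → ℤ} (ha : a ∈ V K) (i j k : Fin K) :
    flip2 a i j k ≠ a k ↔ (k = i ∨ k = j) := by
  unfold flip2
  rcases mem_V.mp ha k with h | h <;> split <;> simp_all <;> omega

lemma flip2_diff {a : Fin K → ℤ} (i j k : Fin K) :
    flip2 a i j k - a k = if k = i ∨ k = j then -2 * a k else 0 := by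
  unfold flip2; split <;> ring

lemma flip2_mem_V {a : Fin K → ℤ} (ha : a ∈ V K) (i j : Fin K) :
    flip2 a i j ∈ V K := by
  rw [mem_V]
  intro k
  unfold flip2
  rcases mem_V.mp ha k with h | h <;> split <;> simp [h]

lemma flip2_flipset {a : Fin K → ℤ} (ha : a ∈ V K) (i j : Fin K) :
    (univ.filter fun k : Fin K => flip2 a i j k ≠ a k) = {i, j} := by
  ext k
  simp [flip2_ne_iff ha i j k]

lemma filter_lt_fst {i j : Fin K} (hij : i < j) :
    (univ.filter fun k : Fin K => k < i ∧ (k = i ∨ k = j)) = ∅ := by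
  apply Finset.filter_false_of_mem
  intro x _
  rintro ⟨h1, h2 | h2⟩ <;> omega

lemma filter_lt_snd {i j : Fin K} (hij : i < j) :
    (univ.filter fun k : Fin K => k < j ∧ (k = i ∨ k = j)) = {i} := by
  ext k
  simp only [mem_filter, mem_univ, true_and, mem_singleton]
  constructor
  · rintro ⟨h1, h2 | h2⟩ <;> omega
  · rintro rfl; exact ⟨hij, Or.inl rfl⟩

lemma flip2_mem_Eplus {a : Fin K → ℤ} (ha : a ∈ V K) {i j : Fin K}
    (hij : i < j) (hai : a i = 1) (haj : a j = -1) :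
    (a, flip2 a i j) ∈ Eplus K := by
  rw [mem_Eplus_iff]
  refine ⟨ha, flip2_mem_V ha i j, ?_⟩
  intro k hk
  have hfil : (univ.filter fun l : Fin K => l < k ∧ flip2 a i j l - a l ≠ 0) =
      (univ.filter fun l : Fin K => l < k ∧ (l = i ∨ l = j)) := by
    apply filter_congr
    intro l _
    simp only [and_congr_right_iff]
    intro _
    rw [← flip2_ne_iff ha i j l]
    omega
  rw [flip2_diff] at hk ⊢
  have hk2 : k = i ∨ k = j := by
    by_contra hcon
    rw [if_neg hcon] at hk
    exact hk rfl
  rw [hfil, if_pos hk2]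
  rcases hk2 with rfl | rfl
  · rw [filter_lt_fst hij, hai]
    norm_num
  · rw [filter_lt_snd hij, haj]
    norm_num

lemma flip2_mem_Eminus {a : Fin K → ℤ} (ha : a ∈ V K) {i j : Fin K}
    (hij : i < j) (hai : a i = -1) (haj : a j = 1) :
    (a, flip2 a i j) ∈ Eminus K := by
  rw [mem_Eminus_iff]
  refine ⟨ha, flip2_mem_V ha i j, ?_⟩
  intro k hk
  have hfil : (univ.filter fun l : Fin K => l < k ∧ flip2 a i j l - a l ≠ 0) =
      (univ.filter fun l : Fin K => l < k ∧ (l = i ∨ l = j)) := by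
    apply filter_congr
    intro l _
    simp only [and_congr_right_iff]
    intro _
    rw [← flip2_ne_iff ha i j l]
    omega
  rw [flip2_diff] at hk ⊢
  have hk2 : k = i ∨ k = j := by
    by_contra hcon
    rw [if_neg hcon] at hk
    exact hk rfl
  rw [hfil, if_pos hk2]
  rcases hk2 with rfl | rfl
  · rw [filter_lt_fst hij, hai]
    norm_num
  · rw [filter_lt_snd hij, haj]
    norm_num

end CRWAux
namespace CRWAux
open CRW Finset

variable {K : ℕ}

lemma card_pair {i j : Fin K} (h : i ≠ j) : ({i, j} : Finset (Fin K)).card = 2 := by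
  rw [card_insert_of_notMem (by simp [h]), card_singleton]

lemma alphaK_filter_eq {a : Fin K → ℤ} (ha : a ∈ V K) :
    ((V K).filter fun b =>
      (a, b) ∈ Eplus K ∧ (univ.filter fun i : Fin K => b i ≠ a i).card = 2) =
    (Pa K a).image fun q => flip2 a q.1 q.2 := by
  ext b
  rw [mem_image]
  constructor
  · intro hb
    rw [mem_filter] at hb
    obtain ⟨hbV, hE, hcard⟩ := hb
    obtain ⟨i', j', hij', hset⟩ := Finset.card_eq_two.mp hcard
    -- wlog i < j
    obtain ⟨i, j, hij, hset⟩ : ∃ i j : Fin K, i < j ∧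
        (univ.filter fun k : Fin K => b k ≠ a k) = {i, j} := by
      rcases lt_or_gt_of_ne hij' with h | h
      · exact ⟨i', j', h, hset⟩
      · exact ⟨j', i', h, by rw [hset]; exact Finset.pair_comm i' j'⟩
    have hflip : ∀ k, b k ≠ a k ↔ (k = i ∨ k = j) := by
      intro k
      have := Finset.ext_iff.mp hset k
      simpa using this
    have hvala := mem_V.mp ha
    have hvalb := mem_V.mp hbV
    have hbk : ∀ k, b k ≠ a k → b k = -a k := by
      intro k hk
      rcases hvala k with h | h <;> rcases hvalb k with h' | h' <;> omega
    have halt := (mem_Eplus_iff.mp hE).2.2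
    have hfil : ∀ k : Fin K, (univ.filter fun l : Fin K => l < k ∧ b l - a l ≠ 0) =
        (univ.filter fun l : Fin K => l < k ∧ (l = i ∨ l = j)) := by
      intro k
      apply filter_congr
      intro l _
      simp only [and_congr_right_iff]
      intro _
      rw [← hflip l]
      omega
    have hbi : b i ≠ a i := (hflip i).mpr (Or.inl rfl)
    have hbj : b j ≠ a j := (hflip j).mpr (Or.inr rfl)
    have hdi := halt i (by have := hbk i hbi; omega)
    have hdj := halt j (by have := hbk j hbj; omega)
    rw [hfil, filter_lt_fst hij] at hdi
    rw [hfil, filter_lt_snd hij] at hdj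
    simp only [card_empty, card_singleton, pow_one] at hdi hdj
    have hai : a i = 1 := by have := hbk i hbi; norm_num at hdi; omega
    have haj : a j = -1 := by have := hbk j hbj; norm_num at hdj; omega
    refine ⟨(i, j), ?_, ?_⟩
    · unfold Pa
      rw [mem_filter]
      exact ⟨by simp, hij, hai, haj⟩
    · funext k
      unfold flip2
      by_cases hk : k = i ∨ k = j
      · rw [if_pos hk]
        exact (hbk k ((hflip k).mpr hk)).symm ▸ rfl
      · rw [if_neg hk]
        by_contra hcon
        exact hk ((hflip k).mp fun h => hcon h.symm)
  · rintro ⟨⟨i, j⟩, hq, rfl⟩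
    unfold Pa at hq
    rw [mem_filter] at hq
    obtain ⟨-, hij, hai, haj⟩ := hq
    rw [mem_filter]
    refine ⟨flip2_mem_V ha i j, flip2_mem_Eplus ha hij hai haj, ?_⟩
    have : (univ.filter fun k : Fin K => flip2 a i j k ≠ a k) = {i, j} :=
      flip2_flipset ha i j
    rw [this, card_pair hij.ne]

lemma abarK_filter_eq {a : Fin K → ℤ} (ha : a ∈ V K) :
    ((V K).filter fun b =>
      (a, b) ∈ Eminus K ∧ (univ.filter fun i : Fin K => b i ≠ a i).card = 2) =
    (Qa K a).image fun q => flip2 a q.1 q.2 := by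
  ext b
  rw [mem_image]
  constructor
  · intro hb
    rw [mem_filter] at hb
    obtain ⟨hbV, hE, hcard⟩ := hb
    obtain ⟨i', j', hij', hset⟩ := Finset.card_eq_two.mp hcard
    obtain ⟨i, j, hij, hset⟩ : ∃ i j : Fin K, i < j ∧
        (univ.filter fun k : Fin K => b k ≠ a k) = {i, j} := by
      rcases lt_or_gt_of_ne hij' with h | h
      · exact ⟨i', j', h, hset⟩
      · exact ⟨j', i', h, by rw [hset]; exact Finset.pair_comm i' j'⟩
    have hflip : ∀ k, b k ≠ a k ↔ (k = i ∨ k = j) := by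
      intro k
      have := Finset.ext_iff.mp hset k
      simpa using this
    have hvala := mem_V.mp ha
    have hvalb := mem_V.mp hbV
    have hbk : ∀ k, b k ≠ a k → b k = -a k := by
      intro k hk
      rcases hvala k with h | h <;> rcases hvalb k with h' | h' <;> omega
    have halt := (mem_Eminus_iff.mp hE).2.2
    have hfil : ∀ k : Fin K, (univ.filter fun l : Fin K => l < k ∧ b l - a l ≠ 0) =
        (univ.filter fun l : Fin K => l < k ∧ (l = i ∨ l = j)) := by
      intro k
      apply filter_congr
      intro l _
      simp only [and_congr_right_iff]
      intro _
      rw [← hflip l]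
      omega
    have hbi : b i ≠ a i := (hflip i).mpr (Or.inl rfl)
    have hbj : b j ≠ a j := (hflip j).mpr (Or.inr rfl)
    have hdi := halt i (by have := hbk i hbi; omega)
    have hdj := halt j (by have := hbk j hbj; omega)
    rw [hfil, filter_lt_fst hij] at hdi
    rw [hfil, filter_lt_snd hij] at hdj
    simp only [card_empty, card_singleton, pow_one] at hdi hdj
    have hai : a i = -1 := by have := hbk i hbi; norm_num at hdi; omega
    have haj : a j = 1 := by have := hbk j hbj; norm_num at hdj; omega
    refine ⟨(i, j), ?_, ?_⟩
    · unfold Qa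
      rw [mem_filter]
      exact ⟨by simp, hij, hai, haj⟩
    · funext k
      unfold flip2
      by_cases hk : k = i ∨ k = j
      · rw [if_pos hk]
        exact (hbk k ((hflip k).mpr hk)).symm ▸ rfl
      · rw [if_neg hk]
        by_contra hcon
        exact hk ((hflip k).mp fun h => hcon h.symm)
  · rintro ⟨⟨i, j⟩, hq, rfl⟩
    unfold Qa at hq
    rw [mem_filter] at hq
    obtain ⟨-, hij, hai, haj⟩ := hq
    rw [mem_filter]
    refine ⟨flip2_mem_V ha i j, flip2_mem_Eminus ha hij hai haj, ?_⟩
    have : (univ.filter fun k : Fin K => flip2 a i j k ≠ a k) = {i, j} :=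
      flip2_flipset ha i j
    rw [this, card_pair hij.ne]

lemma flip2_injOn {a : Fin K → ℤ} (ha : a ∈ V K) {s : Finset (Fin K × Fin K)}
    (hs : ∀ q ∈ s, q.1 < q.2) :
    Set.InjOn (fun q : Fin K × Fin K => flip2 a q.1 q.2) s := by
  rintro ⟨i, j⟩ hij ⟨i', j'⟩ hij' h
  have h1 : i < j := hs _ hij
  have h2 : i' < j' := hs _ hij'
  have hiff : ∀ k, (k = i ∨ k = j) ↔ (k = i' ∨ k = j') := by
    intro k
    rw [← flip2_ne_iff ha i j k, ← flip2_ne_iff ha i' j' k]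
    simp only at h
    rw [h]
  have e1 := (hiff i).mp (Or.inl rfl)
  have e2 := (hiff j).mp (Or.inr rfl)
  have e3 := (hiff i').mpr (Or.inl rfl)
  have e4 := (hiff j').mpr (Or.inr rfl)
  have : i = i' ∧ j = j' := by
    rcases e1 with h | h <;> rcases e2 with h' | h' <;> omega
  rw [Prod.mk.injEq]
  exact this

lemma alpha2_eq_card {a : Fin K → ℤ} (ha : a ∈ V K) :
    alphaK K 2 a = (Pa K a).card := by
  unfold alphaK
  rw [alphaK_filter_eq ha, Finset.card_image_of_injOn (flip2_injOn ha ?_)]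
  intro q hq
  unfold Pa at hq
  rw [mem_filter] at hq
  exact hq.2.1

lemma abar2_eq_card {a : Fin K → ℤ} (ha : a ∈ V K) :
    abarK K 2 a = (Qa K a).card := by
  unfold abarK
  rw [abarK_filter_eq ha, Finset.card_image_of_injOn (flip2_injOn ha ?_)]
  intro q hq
  unfold Qa at hq
  rw [mem_filter] at hq
  exact hq.2.1

end CRWAux
namespace CRWAux
open CRW Finset

variable {K : ℕ}

lemma f2_formula {a : Fin K → ℤ} (ha : a ∈ V K) :
    (f2 K a : ℝ) = ∑ i : Fin K, (((K : ℝ) - 1 - 2 * (i : ℕ)) / 2) * (a i : ℝ) := by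
  have hval := mem_V.mp ha
  have h1 : (f2 K a : ℝ) = ((Pa K a).card : ℝ) - ((Qa K a).card : ℝ) := by
    unfold f2
    rw [alpha2_eq_card ha, abar2_eq_card ha]
    push_cast
    ring
  rw [h1]
  unfold Pa Qa
  rw [Finset.card_filter, Finset.card_filter]
  push_cast
  rw [← Finset.sum_sub_distrib]
  have h2 : ∀ q ∈ (univ ×ˢ univ : Finset (Fin K × Fin K)),
      ((if q.1 < q.2 ∧ a q.1 = 1 ∧ a q.2 = -1 then (1:ℝ) else 0) -
        (if q.1 < q.2 ∧ a q.1 = -1 ∧ a q.2 = 1 then (1:ℝ) else 0)) =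
      (if q.1 < q.2 then ((a q.1 : ℝ) - (a q.2 : ℝ)) / 2 else 0) := by
    rintro ⟨i, j⟩ -
    by_cases hij : i < j
    · rcases hval i with h | h <;> rcases hval j with h' | h' <;>
        simp [hij, h, h'] <;> norm_num
    · simp [hij]
  rw [Finset.sum_congr rfl h2, Finset.sum_product]
  have h3 : ∀ i : Fin K,
      (∑ j : Fin K, if i < j then ((a i : ℝ) - (a j : ℝ)) / 2 else 0) =
      (((K : ℝ) - 1 - (i : ℕ)) / 2) * (a i : ℝ) -
        ∑ j : Fin K, (if i < j then ((a j : ℝ)) / 2 else 0) := by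
    intro i
    have : (∑ j : Fin K, if i < j then ((a i : ℝ) - (a j : ℝ)) / 2 else 0) =
        (∑ j : Fin K, if i < j then (a i : ℝ) / 2 else 0) -
        ∑ j : Fin K, (if i < j then ((a j : ℝ)) / 2 else 0) := by
      rw [← Finset.sum_sub_distrib]
      apply Finset.sum_congr rfl
      intro j _
      split <;> ring
    rw [this]
    congr 1
    rw [← Finset.sum_filter]
    rw [Finset.sum_const]
    have hcard : (univ.filter fun j : Fin K => i < j).card = K - 1 - (i : ℕ) := by
      rw [show (univ.filter fun j : Fin K => i < j) = Finset.Ioi i from by ext; simp]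
      exact Fin.card_Ioi i
    rw [hcard]
    have hle : (i : ℕ) + 1 ≤ K := i.isLt
    have : ((K - 1 - (i : ℕ) : ℕ) : ℝ) = (K : ℝ) - 1 - (i : ℕ) := by
      push_cast [Nat.cast_sub (by omega : 1 + (i:ℕ) ≤ K), Nat.sub_sub]
      ring
    rw [nsmul_eq_mul, this]
    ring
  rw [Finset.sum_congr rfl (fun i _ => h3 i), Finset.sum_sub_distrib]
  have h4 : (∑ i : Fin K, ∑ j : Fin K, if i < j then ((a j : ℝ)) / 2 else 0) =
      ∑ j : Fin K, ((j : ℕ) : ℝ) / 2 * (a j : ℝ) := by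
    rw [Finset.sum_comm]
    apply Finset.sum_congr rfl
    intro j _
    rw [← Finset.sum_filter, Finset.sum_const]
    have hcard : (univ.filter fun i : Fin K => i < j).card = (j : ℕ) := by
      rw [show (univ.filter fun i : Fin K => i < j) = Finset.Iio j from by ext; simp]
      exact Fin.card_Iio j
    rw [hcard, nsmul_eq_mul]
    ring
  rw [h4, ← Finset.sum_sub_distrib]
  apply Finset.sum_congr rfl
  intro i _
  ring

end CRWAux
namespace CRWAux
open CRW Finset

variable {K : ℕ}

noncomputable def lam (K : ℕ) (i : Fin K) : ℝ :=
  ((2 * K + 1 : ℝ) - 2 * (i : ℕ)) / (2 * ((K : ℝ) + 2))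

lemma f1_cast (a : Fin K → ℤ) : (f1 K a : ℝ) = ∑ i : Fin K, (a i : ℝ) := by
  unfold f1; push_cast; rfl

lemma f_diff {a b : Fin K → ℤ} (ha : a ∈ V K) (hb : b ∈ V K) :
    ((-((1 / 2) * (f1 K b : ℝ) + (1 / ((K : ℝ) + 2)) * (f2 K b : ℝ)) + (K : ℝ) / 2) -
      (-((1 / 2) * (f1 K a : ℝ) + (1 / ((K : ℝ) + 2)) * (f2 K a : ℝ)) + (K : ℝ) / 2)) =
    ∑ i : Fin K, lam K i * ((a i : ℝ) - (b i : ℝ)) := by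
  have hK2 : (K : ℝ) + 2 ≠ 0 := by positivity
  rw [f1_cast, f1_cast, f2_formula ha, f2_formula hb]
  have hper : ∀ i : Fin K, lam K i * ((a i : ℝ) - (b i : ℝ)) =
      ((1/2) * (a i : ℝ) + (1 / ((K:ℝ)+2)) * ((((K:ℝ) - 1 - 2*(i:ℕ))/2) * (a i : ℝ))) -
      ((1/2) * (b i : ℝ) + (1 / ((K:ℝ)+2)) * ((((K:ℝ) - 1 - 2*(i:ℕ))/2) * (b i : ℝ))) := by
    intro i
    unfold lam
    field_simp
    ring
  rw [Finset.sum_congr rfl fun i _ => hper i, Finset.sum_sub_distrib,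
    Finset.sum_add_distrib, Finset.sum_add_distrib, ← Finset.mul_sum, ← Finset.mul_sum,
    ← Finset.mul_sum, ← Finset.mul_sum]
  ring

lemma inner_sum (i : Fin K) :
    (∑ c : Fin K → Fin 3, if c i = 1 then ((sgn K c i : ℤ) : ℝ) else 0) =
    3 ^ (K - 1 - (i : ℕ)) := by
  classical
  set w : Fin K → Fin 3 → ℝ := fun j v =>
    if j < i then (if v = 1 then -1 else 1) else if j = i then (if v = 1 then 1 else 0) else 1
    with hw
  have claimA : ∀ c : Fin K → Fin 3,
      (if c i = 1 then ((sgn K c i : ℤ) : ℝ) else 0) = ∏ j : Fin K, w j (c j) := by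
    intro c
    by_cases hci : c i = 1
    · rw [if_pos hci]
      have h1 : ∀ j : Fin K, w j (c j) =
          (if j < i ∧ c j = 1 then (-1 : ℝ) else 1) := by
        intro j
        rw [hw]
        by_cases hji : j < i
        · by_cases hcj : c j = 1 <;> simp [hji, hcj]
        · by_cases hje : j = i
          · subst hje
            simp [hji, hci]
          · simp [hji, hje]
      rw [Finset.prod_congr rfl fun j _ => h1 j]
      rw [Finset.prod_ite _ _, Finset.prod_const, Finset.prod_const_one, mul_one]
      unfold sgn cnt
      push_cast
      rfl
    · rw [if_neg hci]
      symm
      apply Finset.prod_eq_zero (Finset.mem_univ i)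
      rw [hw]
      simp [hci]
  rw [Finset.sum_congr rfl fun c _ => claimA c]
  rw [← Fintype.prod_sum w]
  have claimC : ∀ j : Fin K, (∑ v : Fin 3, w j v) = if i < j then (3:ℝ) else 1 := by
    intro j
    have d0 : ¬ ((0 : Fin 3) = 1) := by decide
    have d2 : ¬ ((2 : Fin 3) = 1) := by decide
    rcases lt_trichotomy j i with h | h | h
    · simp only [hw, Fin.sum_univ_three, if_pos h, if_neg (show ¬ i < j from by omega)]
      norm_num [d0, d2]
    · subst h
      simp only [hw, Fin.sum_univ_three, if_neg (lt_irrefl j), if_pos (rfl : j = j)]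
      norm_num [d0, d2]
    · simp only [hw, Fin.sum_univ_three, if_neg (show ¬ j < i from by omega),
        if_neg (show j ≠ i from by omega), if_pos h]
      norm_num [d0, d2]
  rw [Finset.prod_congr rfl fun j _ => claimC j]
  rw [Finset.prod_ite _ _, Finset.prod_const, Finset.prod_const_one, mul_one]
  congr 1
  rw [show (univ.filter fun j : Fin K => i < j) = Finset.Ioi i from by ext; simp]
  exact Fin.card_Ioi i

lemma geom_sum : ∀ n : ℕ, (∑ j ∈ Finset.range n, (2 * (j : ℝ) + 3) * 3 ^ j) = n * 3 ^ n := by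
  intro n
  induction n with
  | zero => simp
  | succ n ih =>
    rw [Finset.sum_range_succ, ih]
    push_cast
    ring

lemma key_sum (hK : 1 ≤ K) :
    (∑ i : Fin K, ((2 * (K:ℝ) + 1) - 2 * (i : ℕ)) * 3 ^ (K - 1 - (i : ℕ))) =
    K * 3 ^ K := by
  rw [Fin.sum_univ_eq_sum_range (fun i => ((2 * (K:ℝ) + 1) - 2 * (i : ℕ)) * 3 ^ (K - 1 - i))]
  rw [← Finset.sum_range_reflect]
  rw [← geom_sum K]
  apply Finset.sum_congr rfl
  intro j hj
  rw [Finset.mem_range] at hj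
  have h1 : K - 1 - (K - 1 - j) = j := by omega
  have h2 : ((K - 1 - j : ℕ) : ℝ) = (K : ℝ) - 1 - j := by
    push_cast [Nat.cast_sub (by omega : j ≤ K - 1), Nat.cast_sub hK]
    ring
  rw [h1, h2]
  ring

end CRWAux
namespace CRWAux
open CRW Finset

lemma main (K : ℕ) (hK : 1 ≤ K) :
    innerE K (A K) (gradE K (fun a : Fin K → ℤ =>
      -((1 / 2) * (f1 K a : ℝ) + (1 / ((K : ℝ) + 2)) * (f2 K a : ℝ)) + (K : ℝ) / 2)) =
    (K : ℝ) / ((K : ℝ) + 2) := by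
  set F : (Fin K → ℤ) → ℝ := fun a =>
    -((1 / 2) * (f1 K a : ℝ) + (1 / ((K : ℝ) + 2)) * (f2 K a : ℝ)) + (K : ℝ) / 2 with hF
  have hK2 : (K : ℝ) + 2 ≠ 0 := by positivity
  have hdiff : ∀ a b : Fin K → ℤ, a ∈ V K → b ∈ V K →
      F b - F a = ∑ i : Fin K, lam K i * ((a i : ℝ) - (b i : ℝ)) := by
    intro a b ha hb
    rw [hF]
    exact f_diff ha hb
  have hSplus : (∑ p ∈ Eplus K, (F p.2 - F p.1)) = (K : ℝ) * 3 ^ K / ((K : ℝ) + 2) := by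
    rw [Eplus_eq_image, Finset.sum_image (fun c _ c' _ h => enc_injective h)]
    have h1 : ∀ c : Fin K → Fin 3,
        F (encB K c) - F (encA K c) =
        ∑ i : Fin K, (if c i = 1 then 2 * lam K i * ((sgn K c i : ℤ) : ℝ) else 0) := by
      intro c
      rw [hdiff _ _ (encA_mem c) (encB_mem c)]
      apply Finset.sum_congr rfl
      intro i _
      have hd := enc_diff c i
      by_cases hci : c i = 1
      · rw [if_pos hci] at hd ⊢
        have h2 : encA K c i - encB K c i = 2 * sgn K c i := by omega
        have h3 : (encA K c i : ℝ) - (encB K c i : ℝ) = 2 * ((sgn K c i : ℤ) : ℝ) := by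
          have := congrArg (fun z : ℤ => (z : ℝ)) h2
          push_cast at this
          linarith
        rw [h3]
        ring
      · rw [if_neg hci] at hd ⊢
        have h2 : encA K c i = encB K c i := by omega
        rw [h2]
        ring
    rw [Finset.sum_congr rfl fun c _ => h1 c, Finset.sum_comm]
    have h3 : ∀ i : Fin K,
        (∑ c : Fin K → Fin 3, if c i = 1 then 2 * lam K i * ((sgn K c i : ℤ) : ℝ) else 0) =
        2 * lam K i * 3 ^ (K - 1 - (i : ℕ)) := by
      intro i
      rw [← inner_sum i, Finset.mul_sum]
      apply Finset.sum_congr rfl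
      intro c _
      split <;> ring
    rw [Finset.sum_congr rfl fun i _ => h3 i]
    have h4 : ∀ i : Fin K, 2 * lam K i * (3 : ℝ) ^ (K - 1 - (i : ℕ)) =
        (1 / ((K : ℝ) + 2)) * (((2 * (K : ℝ) + 1) - 2 * (i : ℕ)) * 3 ^ (K - 1 - (i : ℕ))) := by
      intro i
      unfold lam
      field_simp
    rw [Finset.sum_congr rfl fun i _ => h4 i, ← Finset.mul_sum, key_sum hK]
    field_simp
  have hSminus : (∑ p ∈ Eminus K, (F p.2 - F p.1)) = -∑ p ∈ Eplus K, (F p.2 - F p.1) := by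
    rw [Eminus_eq_image, Finset.sum_image (fun p _ q _ h => neg_pair_injective h),
      ← Finset.sum_neg_distrib]
    apply Finset.sum_congr rfl
    intro p hp
    obtain ⟨a, b⟩ := p
    obtain ⟨ha, hb, -⟩ := mem_Eplus_iff.mp hp
    simp only
    rw [hdiff _ _ ha hb, hdiff _ _ (neg_mem_V ha) (neg_mem_V hb), ← Finset.sum_neg_distrib]
    apply Finset.sum_congr rfl
    intro i _
    simp only [Pi.neg_apply]
    push_cast
    ring
  have hEK : (∑ e ∈ EK K, A K e * gradE K F e) =
      2 * ∑ p ∈ Eplus K, (F p.2 - F p.1) := by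
    unfold EK
    rw [Finset.sum_union (by simp [Finset.disjoint_left])]
    rw [Finset.sum_image (fun p _ q _ h => by simpa using h),
      Finset.sum_image (fun p _ q _ h => by simpa using h)]
    simp only [CRW.A, CRW.gradE, if_true, Bool.false_eq_true, if_false]
    rw [show (∑ p ∈ Eminus K, (-1 : ℝ) * (F p.2 - F p.1)) =
        -∑ p ∈ Eminus K, (F p.2 - F p.1) from by
      rw [← Finset.sum_neg_distrib]; apply Finset.sum_congr rfl; intro p _; ring]
    rw [hSminus]
    simp only [one_mul]
    ring
  unfold innerE
  rw [hEK, hSplus, card_EK]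
  have h3K : (3 : ℝ) ^ K ≠ 0 := by positivity
  push_cast
  field_simp

end CRWAux

/-- With `f = -((1/2)f₁ + (1/(K+2))f₂) + K/2`, `⟨A, ∇f⟩ = K/(K+2)`. -/
theorem statement18 (K : ℕ) (hK : 1 ≤ K) :
    let f : (Fin K → ℤ) → ℝ := fun a : Fin K → ℤ =>
      -((1 / 2) * (CRW.f1 K a : ℝ) + (1 / ((K : ℝ) + 2)) * (CRW.f2 K a : ℝ))
        + (K : ℝ) / 2
    CRW.innerE K (CRW.A K) (CRW.gradE K f) = (K : ℝ) / ((K : ℝ) + 2) := by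
  intro f
  exact CRWAux.main K hK
end

section
/- Let f = −((1/2) f_1 + (1/(K+2)) f_2) + K/2 on V_K and let B = A − ∇f (the divergence-free part of A in its Hodge decomposition). Then ‖B‖² = (1/D_K) Σ_{e ∈ E_K} B(e)² = 2/(K+2). -/
open Finset MeasureTheory Filter

namespace CRW
variable {K : ℕ}

lemma mem_V {a : Fin K → ℤ} : a ∈ V K ↔ ∀ i, a i = -1 ∨ a i = 1 := by
  simp [V, Fintype.mem_piFinset]

lemma altNeg_self (a : Fin K → ℤ) : AltNeg K a a := by
  intro i h; simp at h

lemma mem_Eplus {p : (Fin K → ℤ) × (Fin K → ℤ)} :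
    p ∈ Eplus K ↔ p.1 ∈ V K ∧ p.2 ∈ V K ∧ AltNeg K p.1 p.2 := by
  simp only [Eplus, Finset.mem_filter, Finset.mem_product]
  constructor
  · rintro ⟨⟨h1, h2⟩, h3 | h3⟩
    · exact ⟨h1, h2, h3 ▸ altNeg_self _⟩
    · exact ⟨h1, h2, h3⟩
  · rintro ⟨h1, h2, h3⟩; exact ⟨⟨h1, h2⟩, Or.inr h3⟩

/-- number of "change" positions strictly below `i` -/
def Np (c : Fin K → Fin 3) (i : Fin K) : ℕ :=
  ((Finset.univ.filter fun j : Fin K => j < i ∧ c j = 2)).card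

def av (c : Fin K → Fin 3) (i : Fin K) : ℤ :=
  if c i = 2 then (-1) ^ (Np c i) else if c i = 1 then 1 else -1

def Phi (c : Fin K → Fin 3) : (Fin K → ℤ) × (Fin K → ℤ) :=
  (av c, fun i => if c i = 2 then -(av c i) else av c i)

lemma av_cases (c : Fin K → Fin 3) (i : Fin K) : av c i = -1 ∨ av c i = 1 := by
  unfold av
  split
  · rcases Nat.even_or_odd (Np c i) with h | h
    · right; exact h.neg_one_pow
    · left; exact h.neg_one_pow
  · split
    · right; rfl
    · left; rfl

lemma Phi_diff (c : Fin K → Fin 3) (i : Fin K) :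
    (Phi c).2 i - (Phi c).1 i = if c i = 2 then (-2) * (-1) ^ (Np c i) else 0 := by
  unfold Phi
  dsimp only
  split
  · unfold av; split
    · ring
    · omega
  · ring

lemma Phi_diff_ne_zero_iff (c : Fin K → Fin 3) (i : Fin K) :
    (Phi c).2 i - (Phi c).1 i ≠ 0 ↔ c i = 2 := by
  constructor
  · intro h; by_contra hc; rw [Phi_diff, if_neg hc] at h; exact h rfl
  · intro h; rw [Phi_diff, if_pos h]
    exact mul_ne_zero (by norm_num) (pow_ne_zero _ (by norm_num))

lemma Phi_mem (c : Fin K → Fin 3) : Phi c ∈ Eplus K := by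
  rw [mem_Eplus]
  refine ⟨?_, ?_, ?_⟩
  · rw [mem_V]; intro i; exact av_cases c i
  · rw [mem_V]; intro i
    simp only [Phi]
    split
    · rcases av_cases c i with h | h <;> simp [h]
    · exact av_cases c i
  · intro i hne
    rw [Phi_diff_ne_zero_iff] at hne
    have hset : (Finset.univ.filter fun j : Fin K => j < i ∧ (Phi c).2 j - (Phi c).1 j ≠ 0)
        = Finset.univ.filter fun j : Fin K => j < i ∧ c j = 2 := by
      apply Finset.filter_congr; intro j _
      simp [Phi_diff_ne_zero_iff]
    rw [hset, Phi_diff, if_pos hne]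
    show _ = 2 * (-1) ^ (Np c i + 1)
    ring

end CRW
namespace CRW
variable {K : ℕ}

lemma fin3_cases (v : Fin 3) : v = 0 ∨ v = 1 ∨ v = 2 := by fin_cases v <;> simp

lemma Phi_injective : Function.Injective (Phi (K := K)) := by
  intro c c' h
  funext i
  have e2 : c i = 2 ↔ c' i = 2 := by
    rw [← Phi_diff_ne_zero_iff c i, ← Phi_diff_ne_zero_iff c' i, h]
  by_cases hc : c i = 2
  · rw [hc, e2.1 hc]
  · have hc' : c' i ≠ 2 := fun x => hc (e2.2 x)
    have hav : av c i = av c' i := congrFun (congrArg Prod.fst h) i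
    unfold av at hav
    rw [if_neg hc, if_neg hc'] at hav
    rcases fin3_cases (c i) with h0 | h0 | h0 <;>
      rcases fin3_cases (c' i) with h1 | h1 | h1 <;> simp_all

lemma Phi_surjOn {p : (Fin K → ℤ) × (Fin K → ℤ)} (hp : p ∈ Eplus K) : ∃ c, Phi c = p := by
  obtain ⟨ha, hb, halt⟩ := mem_Eplus.1 hp
  obtain ⟨a, b⟩ := p
  simp only at ha hb halt
  refine ⟨fun i => if b i - a i ≠ 0 then 2 else if a i = 1 then 1 else 0, ?_⟩
  set c : Fin K → Fin 3 := fun i => if b i - a i ≠ 0 then 2 else if a i = 1 then 1 else 0 with hcdef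
  have hc2 : ∀ i, c i = 2 ↔ b i - a i ≠ 0 := by
    intro i
    by_cases hd : b i - a i ≠ 0
    · simp [hcdef, hd]
    · by_cases h1 : a i = 1 <;> simp [hcdef, hd, h1]
  have hNp : ∀ i, Np c i =
      ((Finset.univ.filter fun j : Fin K => j < i ∧ b j - a j ≠ 0)).card := by
    intro i; unfold Np
    congr 1
    apply Finset.filter_congr; intro j _
    simp only [hc2 j]
  have hav : ∀ i, av c i = a i := by
    intro i
    rcases mem_V.1 ha i with h1 | h1 <;> rcases mem_V.1 hb i with h2 | h2
    all_goals (
      by_cases hd : b i - a i ≠ 0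
      · have hc := (hc2 i).2 hd
        have hdd := halt i hd
        rw [← hNp i] at hdd
        unfold av; rw [if_pos hc]
        rcases Nat.even_or_odd (Np c i) with hpar | hpar
        · rw [pow_succ, hpar.neg_one_pow] at hdd; rw [hpar.neg_one_pow]; omega
        · rw [pow_succ, hpar.neg_one_pow] at hdd; rw [hpar.neg_one_pow]; omega
      · have hc : c i ≠ 2 := fun x => hd ((hc2 i).1 x)
        unfold av; rw [if_neg hc]
        first
          | omega
          | simp [hcdef, h1, h2])
  refine Prod.ext ?_ ?_
  · funext i; exact hav i
  · funext i
    show (if c i = 2 then -(av c i) else av c i) = b i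
    by_cases hc : c i = 2
    · rw [if_pos hc, hav i]
      have hd := (hc2 i).1 hc
      rcases mem_V.1 ha i with h1 | h1 <;> rcases mem_V.1 hb i with h2 | h2 <;> omega
    · rw [if_neg hc, hav i]
      have hd : ¬ b i - a i ≠ 0 := fun x => hc ((hc2 i).2 x)
      omega

lemma Eplus_eq_image : Eplus K = Finset.univ.image (Phi (K := K)) := by
  ext p
  simp only [Finset.mem_image, Finset.mem_univ, true_and]
  exact ⟨fun hp => Phi_surjOn hp, fun ⟨c, hc⟩ => hc ▸ Phi_mem c⟩

lemma sum_Eplus_eq {M : Type*} [AddCommMonoid M] (F : (Fin K → ℤ) × (Fin K → ℤ) → M) :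
    ∑ p ∈ Eplus K, F p = ∑ c : Fin K → Fin 3, F (Phi c) := by
  rw [Eplus_eq_image, Finset.sum_image (fun x _ y _ h => Phi_injective h)]

lemma card_Eplus : (Eplus K).card = 3 ^ K := by
  rw [Eplus_eq_image, Finset.card_image_of_injective _ Phi_injective]
  simp [Fintype.card_fun]

end CRW
namespace CRW
variable {K : ℕ}

lemma altPos_self (a : Fin K → ℤ) : AltPos K a a := by
  intro i h; simp at h

lemma mem_Eminus {p : (Fin K → ℤ) × (Fin K → ℤ)} :
    p ∈ Eminus K ↔ p.1 ∈ V K ∧ p.2 ∈ V K ∧ AltPos K p.1 p.2 := by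
  simp only [Eminus, Finset.mem_filter, Finset.mem_product]
  constructor
  · rintro ⟨⟨h1, h2⟩, h3 | h3⟩
    · exact ⟨h1, h2, h3 ▸ altPos_self _⟩
    · exact ⟨h1, h2, h3⟩
  · rintro ⟨h1, h2, h3⟩; exact ⟨⟨h1, h2⟩, Or.inr h3⟩

lemma altNeg_iff_altPos (a b : Fin K → ℤ) : AltNeg K a b ↔ AltPos K b a := by
  have hset : ∀ i : Fin K,
      (Finset.univ.filter fun j : Fin K => j < i ∧ a j - b j ≠ 0)
        = Finset.univ.filter fun j : Fin K => j < i ∧ b j - a j ≠ 0 := by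
    intro i; apply Finset.filter_congr; intro j _
    constructor <;> (intro h; exact ⟨h.1, by omega⟩)
  constructor
  · intro h i hi
    have := h i (by omega)
    rw [hset i, pow_succ] at *
    omega
  · intro h i hi
    have := h i (by omega)
    rw [hset i] at this
    rw [pow_succ]
    omega

lemma Eminus_eq_image_swap : Eminus K = (Eplus K).image Prod.swap := by
  ext p
  simp only [Finset.mem_image]
  constructor
  · intro hp
    obtain ⟨h1, h2, h3⟩ := mem_Eminus.1 hp
    exact ⟨p.swap, mem_Eplus.2 ⟨h2, h1, (altNeg_iff_altPos _ _).2 h3⟩, Prod.swap_swap p⟩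
  · rintro ⟨q, hq, rfl⟩
    obtain ⟨h1, h2, h3⟩ := mem_Eplus.1 hq
    exact mem_Eminus.2 ⟨h2, h1, (altNeg_iff_altPos _ _).1 h3⟩

lemma sum_Eminus_eq {M : Type*} [AddCommMonoid M] (F : (Fin K → ℤ) × (Fin K → ℤ) → M) :
    ∑ p ∈ Eminus K, F p = ∑ p ∈ Eplus K, F p.swap := by
  rw [Eminus_eq_image_swap, Finset.sum_image]
  intro x _ y _ h
  exact Prod.swap_injective h

lemma sum_EK {M : Type*} [AddCommMonoid M] (F : Edge K → M) :
    ∑ e ∈ EK K, F e = ∑ p ∈ Eplus K, F (true, p) + ∑ p ∈ Eminus K, F (false, p) := by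
  rw [EK, Finset.sum_union, Finset.sum_image (by intro x _ y _ h; exact (Prod.mk.injEq _ _ _ _ ▸ h).2),
    Finset.sum_image (by intro x _ y _ h; exact (Prod.mk.injEq _ _ _ _ ▸ h).2)]
  rw [Finset.disjoint_left]
  rintro e he he'
  simp only [Finset.mem_image] at he he'
  obtain ⟨_, _, rfl⟩ := he
  obtain ⟨_, _, h⟩ := he'
  exact Bool.noConfusion (congrArg Prod.fst h)

lemma card_Eminus : (Eminus K).card = 3 ^ K := by
  rw [Eminus_eq_image_swap, Finset.card_image_of_injective _ Prod.swap_injective, card_Eplus]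

lemma card_EK : (EK K).card = 2 * 3 ^ K := by
  have := sum_EK (K := K) (fun _ => (1 : ℕ))
  simp only [Finset.sum_const, smul_eq_mul, mul_one] at this
  rw [Finset.card_eq_sum_ones] at this ⊢
  rw [this, card_Eplus, card_Eminus]
  ring

lemma sum_sq_B (f : (Fin K → ℤ) → ℝ) :
    ∑ e ∈ EK K, (A K e - gradE K f e) ^ 2
      = 2 * ∑ p ∈ Eplus K, (1 - (f p.2 - f p.1)) ^ 2 := by
  rw [sum_EK]
  have h2 : ∑ p ∈ Eminus K, (A K (false, p) - gradE K f (false, p)) ^ 2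
      = ∑ p ∈ Eplus K, (1 - (f p.2 - f p.1)) ^ 2 := by
    rw [sum_Eminus_eq]
    apply Finset.sum_congr rfl; intro p _
    simp only [A, gradE, Prod.snd_swap, Prod.fst_swap, Bool.false_eq_true, if_false]
    ring
  have h1 : ∑ p ∈ Eplus K, (A K (true, p) - gradE K f (true, p)) ^ 2
      = ∑ p ∈ Eplus K, (1 - (f p.2 - f p.1)) ^ 2 := by
    apply Finset.sum_congr rfl; intro p _
    simp only [A, gradE, if_true]
  rw [h1, h2]; ring

end CRW
namespace CRW
variable {K : ℕ}

/-- flip `a` at both coordinates of `q`: value `-1` at `q.1` and `1` at `q.2`. -/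
def psi (a : Fin K → ℤ) (q : Fin K × Fin K) : Fin K → ℤ :=
  fun t => if t = q.1 then -1 else if t = q.2 then 1 else a t

lemma decode_two (a b : Fin K → ℤ) (ha : a ∈ V K) (hb : b ∈ V K)
    (halt : AltNeg K a b) {i j : Fin K} (hij : i < j)
    (hset : (Finset.univ.filter fun t : Fin K => b t ≠ a t) = {i, j}) :
    a i = 1 ∧ a j = -1 ∧ b = psi a (i, j) := by
  have hmem : ∀ t : Fin K, b t ≠ a t ↔ (t = i ∨ t = j) := by
    intro t
    constructor
    · intro h
      have : t ∈ ({i, j} : Finset (Fin K)) := hset ▸ (Finset.mem_filter.2 ⟨Finset.mem_univ t, h⟩)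
      simpa using this
    · intro h
      have ht : t ∈ (Finset.univ.filter fun t : Fin K => b t ≠ a t) := by
        rw [hset]; simpa using h
      exact (Finset.mem_filter.1 ht).2
  have hdi : b i ≠ a i := (hmem i).2 (Or.inl rfl)
  have hdj : b j ≠ a j := (hmem j).2 (Or.inr rfl)
  have hcnt_i : (Finset.univ.filter fun s : Fin K => s < i ∧ b s - a s ≠ 0) = ∅ := by
    ext s
    simp only [Finset.mem_filter, Finset.mem_univ, true_and, Finset.notMem_empty, iff_false,
      not_and]
    intro hs hne
    rcases (hmem s).1 (fun e => hne (by rw [e]; ring)) with rfl | rfl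
    · exact absurd hs (lt_irrefl _)
    · exact absurd (hs.trans hij) (lt_irrefl _)
  have hcnt_j : (Finset.univ.filter fun s : Fin K => s < j ∧ b s - a s ≠ 0) = {i} := by
    ext s
    simp only [Finset.mem_filter, Finset.mem_univ, true_and, Finset.mem_singleton]
    constructor
    · rintro ⟨hs, hne⟩
      rcases (hmem s).1 (fun e => hne (by rw [e]; ring)) with rfl | rfl
      · rfl
      · exact absurd hs (lt_irrefl _)
    · rintro rfl
      exact ⟨hij, sub_ne_zero.2 hdi⟩
  have ei := halt i (sub_ne_zero.2 hdi)
  rw [hcnt_i] at ei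
  simp only [Finset.card_empty, zero_add, pow_one] at ei
  have ej := halt j (sub_ne_zero.2 hdj)
  rw [hcnt_j] at ej
  simp only [Finset.card_singleton] at ej
  norm_num at ej
  have hai := mem_V.1 ha i; have haj := mem_V.1 ha j
  have hbi := mem_V.1 hb i; have hbj := mem_V.1 hb j
  refine ⟨by omega, by omega, ?_⟩
  funext t
  show b t = if t = i then -1 else if t = j then 1 else a t
  by_cases hti : t = i
  · subst hti; rw [if_pos rfl]; omega
  · rw [if_neg hti]
    by_cases htj : t = j
    · subst htj; rw [if_pos rfl]; omega
    · rw [if_neg htj]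
      by_contra hne
      rcases (hmem t).1 hne with h | h
      · exact hti h
      · exact htj h

lemma encode_two (a : Fin K → ℤ) (ha : a ∈ V K) {i j : Fin K} (hij : i < j)
    (hai : a i = 1) (haj : a j = -1) :
    psi a (i, j) ∈ V K ∧ (a, psi a (i, j)) ∈ Eplus K ∧
      (Finset.univ.filter fun t : Fin K => psi a (i, j) t ≠ a t) = {i, j} := by
  have hne : i ≠ j := ne_of_lt hij
  set b := psi a (i, j) with hbdef
  have hbi : b i = -1 := by simp [hbdef, psi]
  have hbj : b j = 1 := by simp [hbdef, psi, hne.symm]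
  have hbt : ∀ t, t ≠ i → t ≠ j → b t = a t := by
    intro t h1 h2; simp [hbdef, psi, h1, h2]
  have hsetd : (Finset.univ.filter fun t : Fin K => b t ≠ a t) = {i, j} := by
    ext t
    simp only [Finset.mem_filter, Finset.mem_univ, true_and, Finset.mem_insert,
      Finset.mem_singleton]
    constructor
    · intro h
      by_contra hc
      push_neg at hc
      exact h (hbt t hc.1 hc.2)
    · rintro (rfl | rfl) <;> omega
  have hbV : b ∈ V K := by
    rw [mem_V]; intro t
    by_cases h1 : t = i
    · subst h1; omega
    · by_cases h2 : t = j
      · subst h2; omega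
      · rw [hbt t h1 h2]; exact mem_V.1 ha t
  refine ⟨hbV, ?_, hsetd⟩
  rw [mem_Eplus]
  refine ⟨ha, hbV, ?_⟩
  show AltNeg K a b
  intro t hnt
  have htij : t = i ∨ t = j := by
    by_contra hc
    push_neg at hc
    exact hnt (by rw [hbt t hc.1 hc.2]; ring)
  have hcnt_i : (Finset.univ.filter fun s : Fin K => s < i ∧ b s - a s ≠ 0) = ∅ := by
    ext s
    simp only [Finset.mem_filter, Finset.mem_univ, true_and, Finset.notMem_empty, iff_false,
      not_and]
    intro hs hne2
    have : s = i ∨ s = j := by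
      by_contra hc; push_neg at hc
      exact hne2 (by rw [hbt s hc.1 hc.2]; ring)
    rcases this with rfl | rfl
    · exact absurd hs (lt_irrefl _)
    · exact absurd (hs.trans hij) (lt_irrefl _)
  have hcnt_j : (Finset.univ.filter fun s : Fin K => s < j ∧ b s - a s ≠ 0) = {i} := by
    ext s
    simp only [Finset.mem_filter, Finset.mem_univ, true_and, Finset.mem_singleton]
    constructor
    · rintro ⟨hs, hne2⟩
      have : s = i ∨ s = j := by
        by_contra hc; push_neg at hc
        exact hne2 (by rw [hbt s hc.1 hc.2]; ring)
      rcases this with rfl | rfl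
      · rfl
      · exact absurd hs (lt_irrefl _)
    · rintro rfl
      exact ⟨hij, by omega⟩
  rcases htij with rfl | rfl
  · rw [hcnt_i]; simp; omega
  · rw [hcnt_j]; simp; omega

lemma alphaK_two (a : Fin K → ℤ) (ha : a ∈ V K) :
    alphaK K 2 a = (((Finset.univ ×ˢ Finset.univ : Finset (Fin K × Fin K))).filter
      fun q => q.1 < q.2 ∧ a q.1 = 1 ∧ a q.2 = -1).card := by
  classical
  unfold alphaK
  have key : (V K).filter (fun b =>
      (a, b) ∈ Eplus K ∧ (Finset.univ.filter fun i : Fin K => b i ≠ a i).card = 2)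
      = (((Finset.univ ×ˢ Finset.univ : Finset (Fin K × Fin K))).filter
        fun q => q.1 < q.2 ∧ a q.1 = 1 ∧ a q.2 = -1).image (psi a) := by
    ext b
    simp only [Finset.mem_filter, Finset.mem_image, Finset.mem_product, Finset.mem_univ,
      true_and]
    constructor
    · rintro ⟨hbV, hE, hcard⟩
      obtain ⟨-, -, halt⟩ := mem_Eplus.1 hE
      obtain ⟨i, j, hij, hset⟩ := Finset.card_eq_two.1 hcard
      rcases hij.lt_or_gt with hlt | hlt
      · obtain ⟨h1, h2, h3⟩ := decode_two a b ha hbV halt hlt hset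
        exact ⟨(i, j), ⟨hlt, h1, h2⟩, h3.symm⟩
      · rw [Finset.pair_comm] at hset
        obtain ⟨h1, h2, h3⟩ := decode_two a b ha hbV halt hlt hset
        exact ⟨(j, i), ⟨hlt, h1, h2⟩, h3.symm⟩
    · rintro ⟨q, ⟨hlt, h1, h2⟩, rfl⟩
      obtain ⟨hbV, hE, hset⟩ := encode_two a ha hlt h1 h2
      exact ⟨hbV, hE, by rw [hset]; rw [Finset.card_insert_of_notMem (by simp [ne_of_lt hlt]),
        Finset.card_singleton]⟩
  rw [key, Finset.card_image_of_injOn]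
  intro q hq q' hq' heq
  simp only [Finset.coe_filter, Set.mem_setOf_eq, Finset.mem_product] at hq hq'
  obtain ⟨-, hlt, h1, h2⟩ := hq
  obtain ⟨-, hlt', h1', h2'⟩ := hq'
  have e1 : q.1 = q'.1 := by
    have hv : psi a q' q.1 = -1 := by rw [← heq]; simp [psi]
    by_contra hne
    unfold psi at hv
    rw [if_neg hne] at hv
    by_cases h : q.1 = q'.2
    · rw [if_pos h] at hv; omega
    · rw [if_neg h] at hv; omega
  have e2 : q.2 = q'.2 := by
    have hv : psi a q' q.2 = 1 := by
      rw [← heq]; simp [psi, (ne_of_lt hlt).symm]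
    unfold psi at hv
    by_cases h : q.2 = q'.1
    · rw [if_pos h] at hv; omega
    · rw [if_neg h] at hv
      by_contra hne
      rw [if_neg hne] at hv
      omega
  exact Prod.ext e1 e2

end CRW
namespace CRW
variable {K : ℕ}

/-- flip `a` at both coordinates of `q`: value `1` at `q.1` and `-1` at `q.2`. -/
def psi2 (a : Fin K → ℤ) (q : Fin K × Fin K) : Fin K → ℤ :=
  fun t => if t = q.1 then 1 else if t = q.2 then -1 else a t

lemma decode_two' (a b : Fin K → ℤ) (ha : a ∈ V K) (hb : b ∈ V K)
    (halt : AltPos K a b) {i j : Fin K} (hij : i < j)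
    (hset : (Finset.univ.filter fun t : Fin K => b t ≠ a t) = {i, j}) :
    a i = -1 ∧ a j = 1 ∧ b = psi2 a (i, j) := by
  have hmem : ∀ t : Fin K, b t ≠ a t ↔ (t = i ∨ t = j) := by
    intro t
    constructor
    · intro h
      have : t ∈ ({i, j} : Finset (Fin K)) := hset ▸ (Finset.mem_filter.2 ⟨Finset.mem_univ t, h⟩)
      simpa using this
    · intro h
      have ht : t ∈ (Finset.univ.filter fun t : Fin K => b t ≠ a t) := by
        rw [hset]; simpa using h
      exact (Finset.mem_filter.1 ht).2
  have hdi : b i ≠ a i := (hmem i).2 (Or.inl rfl)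
  have hdj : b j ≠ a j := (hmem j).2 (Or.inr rfl)
  have hcnt_i : (Finset.univ.filter fun s : Fin K => s < i ∧ b s - a s ≠ 0) = ∅ := by
    ext s
    simp only [Finset.mem_filter, Finset.mem_univ, true_and, Finset.notMem_empty, iff_false,
      not_and]
    intro hs hne
    rcases (hmem s).1 (fun e => hne (by rw [e]; ring)) with rfl | rfl
    · exact absurd hs (lt_irrefl _)
    · exact absurd (hs.trans hij) (lt_irrefl _)
  have hcnt_j : (Finset.univ.filter fun s : Fin K => s < j ∧ b s - a s ≠ 0) = {i} := by
    ext s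
    simp only [Finset.mem_filter, Finset.mem_univ, true_and, Finset.mem_singleton]
    constructor
    · rintro ⟨hs, hne⟩
      rcases (hmem s).1 (fun e => hne (by rw [e]; ring)) with rfl | rfl
      · rfl
      · exact absurd hs (lt_irrefl _)
    · rintro rfl
      exact ⟨hij, sub_ne_zero.2 hdi⟩
  have ei := halt i (sub_ne_zero.2 hdi)
  rw [hcnt_i] at ei
  simp only [Finset.card_empty, pow_zero, mul_one] at ei
  have ej := halt j (sub_ne_zero.2 hdj)
  rw [hcnt_j] at ej
  simp only [Finset.card_singleton, pow_one] at ej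
  have hai := mem_V.1 ha i; have haj := mem_V.1 ha j
  have hbi := mem_V.1 hb i; have hbj := mem_V.1 hb j
  refine ⟨by omega, by omega, ?_⟩
  funext t
  show b t = if t = i then 1 else if t = j then -1 else a t
  by_cases hti : t = i
  · subst hti; rw [if_pos rfl]; omega
  · rw [if_neg hti]
    by_cases htj : t = j
    · subst htj; rw [if_pos rfl]; omega
    · rw [if_neg htj]
      by_contra hne
      rcases (hmem t).1 hne with h | h
      · exact hti h
      · exact htj h

lemma encode_two' (a : Fin K → ℤ) (ha : a ∈ V K) {i j : Fin K} (hij : i < j)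
    (hai : a i = -1) (haj : a j = 1) :
    psi2 a (i, j) ∈ V K ∧ (a, psi2 a (i, j)) ∈ Eminus K ∧
      (Finset.univ.filter fun t : Fin K => psi2 a (i, j) t ≠ a t) = {i, j} := by
  have hne : i ≠ j := ne_of_lt hij
  set b := psi2 a (i, j) with hbdef
  have hbi : b i = 1 := by simp [hbdef, psi2]
  have hbj : b j = -1 := by simp [hbdef, psi2, hne.symm]
  have hbt : ∀ t, t ≠ i → t ≠ j → b t = a t := by
    intro t h1 h2; simp [hbdef, psi2, h1, h2]
  have hsetd : (Finset.univ.filter fun t : Fin K => b t ≠ a t) = {i, j} := by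
    ext t
    simp only [Finset.mem_filter, Finset.mem_univ, true_and, Finset.mem_insert,
      Finset.mem_singleton]
    constructor
    · intro h
      by_contra hc
      push_neg at hc
      exact h (hbt t hc.1 hc.2)
    · rintro (rfl | rfl) <;> omega
  have hbV : b ∈ V K := by
    rw [mem_V]; intro t
    by_cases h1 : t = i
    · subst h1; omega
    · by_cases h2 : t = j
      · subst h2; omega
      · rw [hbt t h1 h2]; exact mem_V.1 ha t
  refine ⟨hbV, ?_, hsetd⟩
  rw [mem_Eminus]
  refine ⟨ha, hbV, ?_⟩
  show AltPos K a b
  intro t hnt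
  have htij : t = i ∨ t = j := by
    by_contra hc
    push_neg at hc
    exact hnt (by rw [hbt t hc.1 hc.2]; ring)
  have hcnt_i : (Finset.univ.filter fun s : Fin K => s < i ∧ b s - a s ≠ 0) = ∅ := by
    ext s
    simp only [Finset.mem_filter, Finset.mem_univ, true_and, Finset.notMem_empty, iff_false,
      not_and]
    intro hs hne2
    have : s = i ∨ s = j := by
      by_contra hc; push_neg at hc
      exact hne2 (by rw [hbt s hc.1 hc.2]; ring)
    rcases this with rfl | rfl
    · exact absurd hs (lt_irrefl _)
    · exact absurd (hs.trans hij) (lt_irrefl _)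
  have hcnt_j : (Finset.univ.filter fun s : Fin K => s < j ∧ b s - a s ≠ 0) = {i} := by
    ext s
    simp only [Finset.mem_filter, Finset.mem_univ, true_and, Finset.mem_singleton]
    constructor
    · rintro ⟨hs, hne2⟩
      have : s = i ∨ s = j := by
        by_contra hc; push_neg at hc
        exact hne2 (by rw [hbt s hc.1 hc.2]; ring)
      rcases this with rfl | rfl
      · rfl
      · exact absurd hs (lt_irrefl _)
    · rintro rfl
      exact ⟨hij, by omega⟩
  rcases htij with rfl | rfl
  · rw [hcnt_i]; simp; omega
  · rw [hcnt_j]; simp; omega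

lemma abarK_two (a : Fin K → ℤ) (ha : a ∈ V K) :
    abarK K 2 a = (((Finset.univ ×ˢ Finset.univ : Finset (Fin K × Fin K))).filter
      fun q => q.1 < q.2 ∧ a q.1 = -1 ∧ a q.2 = 1).card := by
  classical
  unfold abarK
  have key : (V K).filter (fun b =>
      (a, b) ∈ Eminus K ∧ (Finset.univ.filter fun i : Fin K => b i ≠ a i).card = 2)
      = (((Finset.univ ×ˢ Finset.univ : Finset (Fin K × Fin K))).filter
        fun q => q.1 < q.2 ∧ a q.1 = -1 ∧ a q.2 = 1).image (psi2 a) := by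
    ext b
    simp only [Finset.mem_filter, Finset.mem_image, Finset.mem_product, Finset.mem_univ,
      true_and]
    constructor
    · rintro ⟨hbV, hE, hcard⟩
      obtain ⟨-, -, halt⟩ := mem_Eminus.1 hE
      obtain ⟨i, j, hij, hset⟩ := Finset.card_eq_two.1 hcard
      rcases hij.lt_or_gt with hlt | hlt
      · obtain ⟨h1, h2, h3⟩ := decode_two' a b ha hbV halt hlt hset
        exact ⟨(i, j), ⟨hlt, h1, h2⟩, h3.symm⟩
      · rw [Finset.pair_comm] at hset
        obtain ⟨h1, h2, h3⟩ := decode_two' a b ha hbV halt hlt hset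
        exact ⟨(j, i), ⟨hlt, h1, h2⟩, h3.symm⟩
    · rintro ⟨q, ⟨hlt, h1, h2⟩, rfl⟩
      obtain ⟨hbV, hE, hset⟩ := encode_two' a ha hlt h1 h2
      exact ⟨hbV, hE, by rw [hset]; rw [Finset.card_insert_of_notMem (by simp [ne_of_lt hlt]),
        Finset.card_singleton]⟩
  rw [key, Finset.card_image_of_injOn]
  intro q hq q' hq' heq
  simp only [Finset.coe_filter, Set.mem_setOf_eq, Finset.mem_product] at hq hq'
  obtain ⟨-, hlt, h1, h2⟩ := hq
  obtain ⟨-, hlt', h1', h2'⟩ := hq'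
  have e1 : q.1 = q'.1 := by
    have hv : psi2 a q' q.1 = 1 := by rw [← heq]; simp [psi2]
    by_contra hne
    unfold psi2 at hv
    rw [if_neg hne] at hv
    by_cases h : q.1 = q'.2
    · rw [if_pos h] at hv; omega
    · rw [if_neg h] at hv; omega
  have e2 : q.2 = q'.2 := by
    have hv : psi2 a q' q.2 = -1 := by
      rw [← heq]; simp [psi2, (ne_of_lt hlt).symm]
    unfold psi2 at hv
    by_cases h : q.2 = q'.1
    · rw [if_pos h] at hv; omega
    · rw [if_neg h] at hv
      by_contra hne
      rw [if_neg hne] at hv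
      omega
  exact Prod.ext e1 e2

end CRW
namespace CRW
variable {K : ℕ}

def pairsT (K : ℕ) : Finset (Fin K × Fin K) :=
  (Finset.univ ×ˢ Finset.univ).filter fun q => q.1 < q.2

lemma two_mul_f2 (a : Fin K → ℤ) (ha : a ∈ V K) :
    (∑ q ∈ pairsT K, (a q.1 - a q.2)) = 2 * f2 K a := by
  have step : ∀ q ∈ pairsT K,
      a q.1 - a q.2 = (if a q.1 = 1 ∧ a q.2 = -1 then 2 else 0)
        - (if a q.1 = -1 ∧ a q.2 = 1 then 2 else 0) := by
    intro q _
    rcases mem_V.1 ha q.1 with h1 | h1 <;> rcases mem_V.1 ha q.2 with h2 | h2 <;>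
      simp [h1, h2]
  rw [Finset.sum_congr rfl step, Finset.sum_sub_distrib]
  rw [← Finset.sum_filter, ← Finset.sum_filter, Finset.sum_const, Finset.sum_const]
  unfold pairsT
  rw [Finset.filter_filter, Finset.filter_filter]
  rw [f2, alphaK_two a ha, abarK_two a ha]
  simp only [nsmul_eq_mul]
  ring

lemma sum_pairs_fst (g : Fin K → ℤ) :
    ∑ q ∈ pairsT K, g q.1 = ∑ i : Fin K, g i * ((K - 1 - (i : ℕ) : ℕ) : ℤ) := by
  unfold pairsT
  rw [Finset.sum_filter, Finset.sum_product]
  apply Finset.sum_congr rfl; intro i _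
  have h1 : ∑ j : Fin K, (if (i, j).1 < (i, j).2 then g (i, j).1 else 0)
      = ∑ j ∈ Finset.univ.filter (fun j : Fin K => i < j), g i := by
    rw [Finset.sum_filter]
  rw [h1, Finset.sum_const]
  have h2 : (Finset.univ.filter fun j : Fin K => i < j) = Finset.Ioi i := by
    ext j; simp
  rw [h2, Fin.card_Ioi, nsmul_eq_mul, mul_comm]

lemma sum_pairs_snd (g : Fin K → ℤ) :
    ∑ q ∈ pairsT K, g q.2 = ∑ i : Fin K, g i * ((i : ℕ) : ℤ) := by
  unfold pairsT
  rw [Finset.sum_filter, Finset.sum_product_right]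
  apply Finset.sum_congr rfl; intro j _
  have h1 : ∑ i : Fin K, (if (i, j).1 < (i, j).2 then g (i, j).2 else 0)
      = ∑ i ∈ Finset.univ.filter (fun i : Fin K => i < j), g j := by
    rw [Finset.sum_filter]
  rw [h1, Finset.sum_const]
  have h2 : (Finset.univ.filter fun i : Fin K => i < j) = Finset.Iio j := by
    ext i; simp
  rw [h2, Fin.card_Iio, nsmul_eq_mul, mul_comm]

lemma sum_pairs (g : Fin K → ℤ) :
    ∑ q ∈ pairsT K, (g q.1 - g q.2)
      = ∑ i : Fin K, g i * (((K - 1 - (i : ℕ) : ℕ) : ℤ) - ((i : ℕ) : ℤ)) := by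
  rw [Finset.sum_sub_distrib, sum_pairs_fst, sum_pairs_snd, ← Finset.sum_sub_distrib]
  apply Finset.sum_congr rfl; intro i _; ring

lemma f2_diff (a b : Fin K → ℤ) (ha : a ∈ V K) (hb : b ∈ V K) :
    2 * (f2 K b - f2 K a)
      = ∑ i : Fin K, (b i - a i) * (((K - 1 - (i : ℕ) : ℕ) : ℤ) - ((i : ℕ) : ℤ)) := by
  have e : ∑ q ∈ pairsT K, ((b q.1 - a q.1) - (b q.2 - a q.2))
      = ∑ i : Fin K, (b i - a i) * (((K - 1 - (i : ℕ) : ℕ) : ℤ) - ((i : ℕ) : ℤ)) :=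
    sum_pairs (fun t => b t - a t)
  calc 2 * (f2 K b - f2 K a) = 2 * f2 K b - 2 * f2 K a := by ring
    _ = (∑ q ∈ pairsT K, (b q.1 - b q.2)) - ∑ q ∈ pairsT K, (a q.1 - a q.2) := by
        rw [two_mul_f2 b hb, two_mul_f2 a ha]
    _ = ∑ q ∈ pairsT K, ((b q.1 - a q.1) - (b q.2 - a q.2)) := by
        rw [← Finset.sum_sub_distrib]
        apply Finset.sum_congr rfl; intro q _; ring
    _ = _ := e

end CRW
namespace CRW
variable {K : ℕ}

/-- the coefficient `u_i = (2K+1-2i)/(2(K+2))`. -/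
noncomputable def uR (K : ℕ) (i : Fin K) : ℝ := (2 * K + 1 - 2 * (i : ℕ)) / (2 * ((K : ℝ) + 2))

lemma grad_formula (a b : Fin K → ℤ) (ha : a ∈ V K) (hb : b ∈ V K) :
    (-((1/2) * (f1 K b : ℝ) + (1/((K : ℝ)+2)) * (f2 K b : ℝ)) + (K : ℝ)/2)
      - (-((1/2) * (f1 K a : ℝ) + (1/((K : ℝ)+2)) * (f2 K a : ℝ)) + (K : ℝ)/2)
      = -∑ i : Fin K, (((b i : ℝ) - (a i : ℝ)) * uR K i) := by
  have hz : 2 * (f2 K b - f2 K a) = ∑ i : Fin K, (b i - a i) * ((K : ℤ) - 1 - 2 * (i : ℕ)) := by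
    rw [f2_diff a b ha hb]
    apply Finset.sum_congr rfl; intro i _
    have hi : (i : ℕ) < K := i.isLt
    have hc : ((K - 1 - (i : ℕ) : ℕ) : ℤ) = (K : ℤ) - 1 - (i : ℕ) := by omega
    rw [hc]; ring
  have hr := congrArg (fun z : ℤ => (z : ℝ)) hz
  push_cast at hr
  have hr' : (f2 K b : ℝ) - (f2 K a : ℝ)
      = (∑ i : Fin K, ((b i : ℝ) - (a i : ℝ)) * ((K : ℝ) - 1 - 2 * (i : ℕ))) / 2 := by
    rw [eq_div_iff (by norm_num : (2:ℝ) ≠ 0)]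
    rw [mul_comm] at hr
    rw [hr]
  have hf1 : (f1 K b : ℝ) - (f1 K a : ℝ) = ∑ i : Fin K, ((b i : ℝ) - (a i : ℝ)) := by
    unfold f1
    push_cast
    rw [Finset.sum_sub_distrib]
  have hK : (K : ℝ) + 2 ≠ 0 := by positivity
  calc (-((1/2) * (f1 K b : ℝ) + (1/((K : ℝ)+2)) * (f2 K b : ℝ)) + (K : ℝ)/2)
      - (-((1/2) * (f1 K a : ℝ) + (1/((K : ℝ)+2)) * (f2 K a : ℝ)) + (K : ℝ)/2)
      = -(1/2) * ((f1 K b : ℝ) - (f1 K a : ℝ))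
        - (1/((K : ℝ)+2)) * ((f2 K b : ℝ) - (f2 K a : ℝ)) := by ring
    _ = ∑ i : Fin K, (-(1/2) * (((b i : ℝ) - (a i : ℝ)))
        - (1/((K : ℝ)+2)) * (((b i : ℝ) - (a i : ℝ)) * ((K : ℝ) - 1 - 2 * (i : ℕ)) / 2)) := by
        rw [hf1, hr']
        conv_rhs => rw [Finset.sum_sub_distrib, ← Finset.mul_sum, ← Finset.mul_sum,
          ← Finset.sum_div]
    _ = -∑ i : Fin K, (((b i : ℝ) - (a i : ℝ)) * uR K i) := by
        rw [← Finset.sum_neg_distrib]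
        apply Finset.sum_congr rfl; intro i _
        unfold uR
        field_simp
        ring

end CRW
namespace CRW
variable {K : ℕ}

/-- real-valued edge difference in coordinate `i`. -/
noncomputable def DR (c : Fin K → Fin 3) (i : Fin K) : ℝ :=
  if c i = 2 then (-2) * (-1) ^ (Np c i) else 0

lemma DR_eq (c : Fin K → Fin 3) (i : Fin K) :
    (((Phi c).2 i : ℤ) : ℝ) - (((Phi c).1 i : ℤ) : ℝ) = DR c i := by
  have h := Phi_diff c i
  have h2 := congrArg (fun z : ℤ => (z : ℝ)) h
  push_cast at h2
  rw [h2]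
  unfold DR
  split <;> norm_num

lemma prod_sign (p : Fin K → Prop) [DecidablePred p] (c : Fin K → Fin 3) :
    (∏ t : Fin K, if p t ∧ c t = 2 then (-1 : ℝ) else 1)
      = (-1) ^ (Finset.univ.filter fun t : Fin K => p t ∧ c t = 2).card := by
  rw [Finset.prod_ite (fun _ => (-1 : ℝ)) (fun _ => (1 : ℝ)), Finset.prod_const,
    Finset.prod_const, one_pow, mul_one]

lemma sum_one : (∑ _c : Fin K → Fin 3, (1 : ℝ)) = 3 ^ K := by
  rw [Finset.sum_const, Finset.card_univ]
  simp [Fintype.card_fun]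

lemma sum_DR (i : Fin K) :
    ∑ c : Fin K → Fin 3, DR c i = -2 * 3 ^ (K - 1 - (i : ℕ)) := by
  have hA : ∀ c : Fin K → Fin 3, DR c i
      = ∏ t : Fin K, ((if t = i then (if c t = 2 then (-2 : ℝ) else 0) else 1)
          * (if t < i ∧ c t = 2 then (-1 : ℝ) else 1)) := by
    intro c
    rw [Finset.prod_mul_distrib, Finset.prod_ite_eq' Finset.univ i
      (fun t => (if c t = 2 then (-2 : ℝ) else 0)), if_pos (Finset.mem_univ i),
      prod_sign (fun t => t < i) c]
    unfold DR Np
    by_cases h : c i = 2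
    · rw [if_pos h, if_pos h]
    · rw [if_neg h, if_neg h, zero_mul]
  calc ∑ c : Fin K → Fin 3, DR c i
      = ∑ c ∈ Fintype.piFinset (fun _ : Fin K => (Finset.univ : Finset (Fin 3))),
          ∏ t : Fin K, ((if t = i then (if c t = 2 then (-2 : ℝ) else 0) else 1)
          * (if t < i ∧ c t = 2 then (-1 : ℝ) else 1)) := by
        rw [Fintype.piFinset_univ]
        exact Finset.sum_congr rfl fun c _ => hA c
    _ = ∏ t : Fin K, ∑ v : Fin 3, ((if t = i then (if v = 2 then (-2 : ℝ) else 0) else 1)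
          * (if t < i ∧ v = 2 then (-1 : ℝ) else 1)) := by
        rw [Finset.prod_univ_sum]
    _ = ∏ t : Fin K, (if t = i then (-2 : ℝ) else if t < i then 1 else 3) := by
        apply Finset.prod_congr rfl; intro t _
        rw [Fin.sum_univ_three]
        by_cases h1 : t = i
        · subst h1
          by_cases h2 : (t : Fin K) < t <;> simp [h2]
        · by_cases h2 : t < i <;> simp [h1, h2]; norm_num
    _ = -2 * 3 ^ (K - 1 - (i : ℕ)) := by
        rw [← Finset.mul_prod_erase Finset.univ _ (Finset.mem_univ i), if_pos rfl]
        congr 1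
        have hc : ∀ t ∈ Finset.univ.erase i,
            (if t = i then (-2 : ℝ) else if t < i then 1 else 3)
              = if t < i then 1 else 3 := by
          intro t ht
          rw [if_neg (Finset.mem_erase.1 ht).1]
        rw [Finset.prod_congr rfl hc, Finset.prod_ite (fun _ => (1:ℝ)) (fun _ => (3:ℝ)),
          Finset.prod_const, Finset.prod_const, one_pow, one_mul]
        congr 1
        have : ((Finset.univ.erase i).filter fun t : Fin K => ¬ t < i) = Finset.Ioi i := by
          ext t
          simp only [Finset.mem_filter, Finset.mem_erase, Finset.mem_univ, true_and,
            Finset.mem_Ioi, not_lt]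
          constructor
          · rintro ⟨h1, h2⟩; exact lt_of_le_of_ne h2 (Ne.symm h1.1)
          · intro h; exact ⟨⟨ne_of_gt h, trivial⟩, le_of_lt h⟩
        rw [this, Fin.card_Ioi]

lemma sum_DR_sq (i : Fin K) :
    ∑ c : Fin K → Fin 3, DR c i * DR c i = 4 * 3 ^ (K - 1) := by
  have hA : ∀ c : Fin K → Fin 3, DR c i * DR c i
      = ∏ t : Fin K, (if t = i then (if c t = 2 then (4 : ℝ) else 0) else 1) := by
    intro c
    rw [Finset.prod_ite_eq' Finset.univ i (fun t => (if c t = 2 then (4 : ℝ) else 0)),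
      if_pos (Finset.mem_univ i)]
    unfold DR
    by_cases h : c i = 2
    · rw [if_pos h, if_pos h, mul_mul_mul_comm, ← pow_add]
      rw [Even.neg_one_pow ⟨Np c i, rfl⟩]
      norm_num
    · rw [if_neg h, if_neg h, mul_zero]
  calc ∑ c : Fin K → Fin 3, DR c i * DR c i
      = ∑ c ∈ Fintype.piFinset (fun _ : Fin K => (Finset.univ : Finset (Fin 3))),
          ∏ t : Fin K, (if t = i then (if c t = 2 then (4 : ℝ) else 0) else 1) := by
        rw [Fintype.piFinset_univ]
        exact Finset.sum_congr rfl fun c _ => hA c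
    _ = ∏ t : Fin K, ∑ v : Fin 3, (if t = i then (if v = 2 then (4 : ℝ) else 0) else 1) := by
        rw [Finset.prod_univ_sum]
    _ = ∏ t : Fin K, (if t = i then (4 : ℝ) else 3) := by
        apply Finset.prod_congr rfl; intro t _
        rw [Fin.sum_univ_three]
        by_cases h1 : t = i <;> simp [h1]; norm_num
    _ = 4 * 3 ^ (K - 1) := by
        rw [← Finset.mul_prod_erase Finset.univ _ (Finset.mem_univ i), if_pos rfl]
        congr 1
        have hc : ∀ t ∈ Finset.univ.erase i,
            (if t = i then (4 : ℝ) else 3) = 3 := by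
          intro t ht; rw [if_neg (Finset.mem_erase.1 ht).1]
        rw [Finset.prod_congr rfl hc, Finset.prod_const, Finset.card_erase_of_mem
          (Finset.mem_univ i), Finset.card_univ, Fintype.card_fin]

end CRW
namespace CRW
variable {K : ℕ}

lemma sum_DR_mul {i j : Fin K} (hij : i < j) :
    ∑ c : Fin K → Fin 3, DR c i * DR c j = -4 * 3 ^ ((i : ℕ) + (K - 1 - (j : ℕ))) := by
  have hA : ∀ c : Fin K → Fin 3, DR c i * DR c j
      = ∏ t : Fin K, ((if t = i then (if c t = 2 then (2 : ℝ) else 0) else 1)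
          * ((if t = j then (if c t = 2 then (2 : ℝ) else 0) else 1)
          * (if (i ≤ t ∧ t < j) ∧ c t = 2 then (-1 : ℝ) else 1))) := by
    intro c
    rw [Finset.prod_mul_distrib, Finset.prod_mul_distrib,
      Finset.prod_ite_eq' Finset.univ i (fun t => (if c t = 2 then (2 : ℝ) else 0)),
      Finset.prod_ite_eq' Finset.univ j (fun t => (if c t = 2 then (2 : ℝ) else 0)),
      if_pos (Finset.mem_univ i), if_pos (Finset.mem_univ j),
      prod_sign (fun t => i ≤ t ∧ t < j) c]
    unfold DR
    by_cases h1 : c i = 2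
    · by_cases h2 : c j = 2
      · rw [if_pos h1, if_pos h2, if_pos h1, if_pos h2]
        have hsplit : Np c j = Np c i
            + (Finset.univ.filter fun t : Fin K => (i ≤ t ∧ t < j) ∧ c t = 2).card := by
          unfold Np
          rw [← Finset.card_union_of_disjoint]
          · congr 1
            ext t
            simp only [Finset.mem_filter, Finset.mem_univ, true_and, Finset.mem_union]
            constructor
            · rintro ⟨ht, hc⟩
              rcases lt_or_ge t i with h | h
              · exact Or.inl ⟨h, hc⟩
              · exact Or.inr ⟨⟨h, ht⟩, hc⟩
            · rintro (⟨ht, hc⟩ | ⟨⟨-, ht⟩, hc⟩)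
              · exact ⟨ht.trans hij, hc⟩
              · exact ⟨ht, hc⟩
          · rw [Finset.disjoint_left]
            rintro t ht ht'
            simp only [Finset.mem_filter] at ht ht'
            exact absurd ht.2.1 (not_lt.2 ht'.2.1.1)
        rw [hsplit, pow_add]
        have he : ((-1 : ℝ)) ^ (Np c i) * (-1) ^ (Np c i) = 1 := by
          rw [← pow_add]; exact Even.neg_one_pow ⟨Np c i, rfl⟩
        calc -2 * (-1 : ℝ) ^ Np c i * (-2 * ((-1) ^ Np c i
                * (-1) ^ (Finset.univ.filter fun t : Fin K => (i ≤ t ∧ t < j) ∧ c t = 2).card))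
            = ((-1 : ℝ) ^ (Np c i) * (-1) ^ (Np c i)) * (4
                * (-1) ^ (Finset.univ.filter fun t : Fin K => (i ≤ t ∧ t < j) ∧ c t = 2).card) := by
              ring
          _ = 2 * (2 * (-1) ^ (Finset.univ.filter
                fun t : Fin K => (i ≤ t ∧ t < j) ∧ c t = 2).card) := by
              rw [he]; ring
      · rw [if_neg h2, if_neg h2, mul_zero, zero_mul, mul_zero]
    · rw [if_neg h1, if_neg h1, zero_mul, zero_mul]
  calc ∑ c : Fin K → Fin 3, DR c i * DR c j
      = ∑ c ∈ Fintype.piFinset (fun _ : Fin K => (Finset.univ : Finset (Fin 3))),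
          ∏ t : Fin K, ((if t = i then (if c t = 2 then (2 : ℝ) else 0) else 1)
          * ((if t = j then (if c t = 2 then (2 : ℝ) else 0) else 1)
          * (if (i ≤ t ∧ t < j) ∧ c t = 2 then (-1 : ℝ) else 1))) := by
        rw [Fintype.piFinset_univ]
        exact Finset.sum_congr rfl fun c _ => hA c
    _ = ∏ t : Fin K, ∑ v : Fin 3, ((if t = i then (if v = 2 then (2 : ℝ) else 0) else 1)
          * ((if t = j then (if v = 2 then (2 : ℝ) else 0) else 1)
          * (if (i ≤ t ∧ t < j) ∧ v = 2 then (-1 : ℝ) else 1))) := by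
        rw [Finset.prod_univ_sum]
    _ = ∏ t : Fin K, (if t = i then (-2 : ℝ) else if t = j then 2
          else if i ≤ t ∧ t < j then 1 else 3) := by
        apply Finset.prod_congr rfl; intro t _
        rw [Fin.sum_univ_three]
        by_cases h1 : t = i
        · simp [h1, hij.ne, hij]
          try norm_num
        · by_cases h2 : t = j
          · simp [h2, h1, hij.ne', lt_irrefl]
            try norm_num
          · by_cases h3 : i ≤ t ∧ t < j
            · simp [h1, h2, h3]
              try norm_num
            · simp [h1, h2, h3]
              try norm_num
    _ = -4 * 3 ^ ((i : ℕ) + (K - 1 - (j : ℕ))) := by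
        rw [← Finset.mul_prod_erase Finset.univ _ (Finset.mem_univ i), if_pos rfl]
        have hj : j ∈ Finset.univ.erase i := Finset.mem_erase.2 ⟨hij.ne', Finset.mem_univ j⟩
        rw [← Finset.mul_prod_erase _ _ hj, if_neg hij.ne', if_pos rfl]
        have hc : ∀ t ∈ (Finset.univ.erase i).erase j,
            (if t = i then (-2 : ℝ) else if t = j then 2
              else if i ≤ t ∧ t < j then 1 else 3)
            = if i ≤ t ∧ t < j then 1 else 3 := by
          intro t ht
          rw [if_neg (Finset.mem_erase.1 (Finset.mem_of_mem_erase ht)).1,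
            if_neg (Finset.mem_erase.1 ht).1]
        rw [Finset.prod_congr rfl hc, Finset.prod_ite (fun _ => (1:ℝ)) (fun _ => (3:ℝ)),
          Finset.prod_const, Finset.prod_const, one_pow, one_mul]
        have hset : (((Finset.univ.erase i).erase j).filter
            fun t : Fin K => ¬ (i ≤ t ∧ t < j)) = Finset.Iio i ∪ Finset.Ioi j := by
          ext t
          simp only [Finset.mem_filter, Finset.mem_erase, Finset.mem_univ, and_true, true_and,
            Finset.mem_union, Finset.mem_Iio, Finset.mem_Ioi, not_and, not_lt]
          constructor
          · rintro ⟨⟨htj, hti⟩, himp⟩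
            rcases lt_or_ge t i with h | h
            · exact Or.inl h
            · exact Or.inr (lt_of_le_of_ne (himp h) (Ne.symm htj))
          · rintro (h | h)
            · exact ⟨⟨ne_of_lt (h.trans hij), ne_of_lt h⟩,
                fun hc' => absurd hc' (not_le.2 h)⟩
            · exact ⟨⟨ne_of_gt h, ne_of_gt (hij.trans h)⟩, fun _ => h.le⟩
        rw [hset, Finset.card_union_of_disjoint, Fin.card_Iio, Fin.card_Ioi]
        · ring
        · rw [Finset.disjoint_left]
          intro t ht ht'
          rw [Finset.mem_Iio] at ht
          rw [Finset.mem_Ioi] at ht'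
          exact absurd ((ht'.trans ht).trans hij) (lt_irrefl j)

end CRW
namespace CRW
variable {K : ℕ}

lemma L1 (x : ℝ) (n : ℕ) :
    ∑ i ∈ Finset.range n, (x - 2 * i) * 3 ^ i = ((x + 3)/2 - n) * 3 ^ n - (x + 3)/2 := by
  induction n with
  | zero => simp
  | succ n ih => rw [Finset.sum_range_succ, ih]; push_cast; ring

lemma L2 (n : ℕ) : ∑ i ∈ Finset.range n, (2 * (i:ℝ) + 3) * 3 ^ i = n * 3 ^ n := by
  have h := L1 (-3) n
  have hc : ∀ i ∈ Finset.range n, ((-3:ℝ) - 2*i)*3^i = -((2*(i:ℝ)+3)*3^i) := by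
    intro i _; ring
  rw [Finset.sum_congr rfl hc, Finset.sum_neg_distrib] at h
  have : ((-3:ℝ) + 3)/2 = 0 := by norm_num
  rw [this] at h
  have := neg_eq_iff_eq_neg.1 h
  rw [this]; ring

lemma L3 (n : ℕ) : ∑ i ∈ Finset.range n, (i : ℝ) = n * (n - 1) / 2 := by
  induction n with
  | zero => simp
  | succ n ih => rw [Finset.sum_range_succ, ih]; push_cast; ring

lemma sum_Iio_fin (j : Fin K) (g : ℕ → ℝ) :
    ∑ i ∈ Finset.Iio j, g (i : ℕ) = ∑ i ∈ Finset.range (j : ℕ), g i := by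
  rw [← Nat.Iio_eq_range, ← Fin.map_valEmbedding_Iio, Finset.sum_map]
  rfl

lemma sum_split (F : Fin K → Fin K → ℝ) :
    ∑ i : Fin K, ∑ j : Fin K, F i j
      = (∑ i : Fin K, F i i)
        + (∑ q ∈ pairsT K, F q.1 q.2 + ∑ q ∈ pairsT K, F q.2 q.1) := by
  rw [← Finset.sum_product']
  rw [← Finset.sum_filter_add_sum_filter_not (Finset.univ ×ˢ Finset.univ)
    (fun q : Fin K × Fin K => q.1 = q.2)]
  congr 1
  · apply Finset.sum_nbij' (fun q : Fin K × Fin K => q.1) (fun i : Fin K => (i, i))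
    · intro q _; exact Finset.mem_univ _
    · intro i _
      simp only [Finset.mem_filter, Finset.mem_product, Finset.mem_univ, true_and, and_self]
    · intro q hq
      simp only [Finset.mem_filter] at hq
      exact Prod.ext rfl hq.2
    · intro i _; rfl
    · intro q hq
      simp only [Finset.mem_filter] at hq
      rw [← hq.2]
  · rw [← Finset.sum_filter_add_sum_filter_not
      ((Finset.univ ×ˢ Finset.univ).filter (fun q : Fin K × Fin K => ¬ q.1 = q.2))
      (fun q : Fin K × Fin K => q.1 < q.2)]
    congr 1
    · rw [Finset.filter_filter]
      apply Finset.sum_congr _ (fun q _ => rfl)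
      unfold pairsT
      apply Finset.filter_congr
      intro q _
      constructor
      · rintro ⟨-, h⟩; exact h
      · intro h; exact ⟨ne_of_lt h, h⟩
    · rw [Finset.filter_filter]
      apply Finset.sum_nbij' (fun q : Fin K × Fin K => Prod.swap q)
        (fun q : Fin K × Fin K => Prod.swap q)
      · intro q hq
        simp only [Finset.mem_filter, Finset.mem_product, Finset.mem_univ, true_and,
          and_self, not_lt] at hq ⊢
        unfold pairsT
        simp only [Finset.mem_filter, Finset.mem_product, Finset.mem_univ, true_and, and_self,
          Prod.fst_swap, Prod.snd_swap]
        exact lt_of_le_of_ne hq.2 (fun e => hq.1 e.symm)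
      · intro q hq
        unfold pairsT at hq
        simp only [Finset.mem_filter, Finset.mem_product, Finset.mem_univ, true_and,
          and_self] at hq ⊢
        simp only [Prod.fst_swap, Prod.snd_swap]
        exact ⟨ne_of_gt hq, not_lt.2 (le_of_lt hq)⟩
      · intro q _; exact Prod.swap_swap q
      · intro q _; exact Prod.swap_swap q
      · intro q _; rfl

lemma sum_pairs_mul (g h : Fin K → ℝ) :
    ∑ q ∈ pairsT K, g q.1 * h q.2 = ∑ j : Fin K, h j * ∑ i ∈ Finset.Iio j, g i := by
  unfold pairsT
  rw [Finset.sum_filter, Finset.sum_product_right]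
  apply Finset.sum_congr rfl; intro j _
  have h1 : ∑ i : Fin K, (if (i, j).1 < (i, j).2 then g (i, j).1 * h (i, j).2 else 0)
      = ∑ i ∈ Finset.univ.filter (fun i : Fin K => i < j), g i * h j := by
    rw [Finset.sum_filter]
  rw [h1]
  have h2 : (Finset.univ.filter fun i : Fin K => i < j) = Finset.Iio j := by
    ext i; simp
  rw [h2, ← Finset.sum_mul, mul_comm]

end CRW
namespace CRW
variable {K : ℕ}

lemma T_val (hK : 1 ≤ K) :
    ∑ c : Fin K → Fin 3, (1 + ∑ i : Fin K, uR K i * DR c i) ^ 2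
      = 2 * 3 ^ K / ((K : ℝ) + 2) := by
  have hKne : ((K : ℝ) + 2) ≠ 0 := by positivity
  -- expand the square
  have expand : ∀ c : Fin K → Fin 3,
      (1 + ∑ i : Fin K, uR K i * DR c i) ^ 2
        = 1 + 2 * (∑ i : Fin K, uR K i * DR c i)
          + (∑ i : Fin K, uR K i * DR c i) * (∑ j : Fin K, uR K j * DR c j) := by
    intro c; ring
  rw [Finset.sum_congr rfl (fun c _ => expand c), Finset.sum_add_distrib,
    Finset.sum_add_distrib, sum_one]
  -- linear term
  have hlin : ∑ c : Fin K → Fin 3, 2 * (∑ i : Fin K, uR K i * DR c i)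
      = 2 * ∑ i : Fin K, uR K i * (-2 * 3 ^ (K - 1 - (i : ℕ))) := by
    rw [← Finset.mul_sum, Finset.sum_comm]
    congr 1
    apply Finset.sum_congr rfl; intro i _
    rw [← Finset.mul_sum, sum_DR]
  -- quadratic term
  have hquad : ∑ c : Fin K → Fin 3,
      (∑ i : Fin K, uR K i * DR c i) * (∑ j : Fin K, uR K j * DR c j)
      = ∑ i : Fin K, ∑ j : Fin K,
          (uR K i * uR K j * ∑ c : Fin K → Fin 3, DR c i * DR c j) := by
    have h1 : ∀ c : Fin K → Fin 3,
        (∑ i : Fin K, uR K i * DR c i) * (∑ j : Fin K, uR K j * DR c j)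
          = ∑ i : Fin K, ∑ j : Fin K, uR K i * uR K j * (DR c i * DR c j) := by
      intro c
      rw [Finset.sum_mul_sum]
      apply Finset.sum_congr rfl; intro i _
      apply Finset.sum_congr rfl; intro j _
      ring
    rw [Finset.sum_congr rfl (fun c _ => h1 c), Finset.sum_comm]
    apply Finset.sum_congr rfl; intro i _
    rw [Finset.sum_comm]
    apply Finset.sum_congr rfl; intro j _
    rw [← Finset.mul_sum]
  rw [hlin, hquad]
  rw [sum_split (fun i j => uR K i * uR K j * ∑ c : Fin K → Fin 3, DR c i * DR c j)]
  -- diagonal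
  have hdiag : ∑ i : Fin K, (uR K i * uR K i * ∑ c : Fin K → Fin 3, DR c i * DR c i)
      = ∑ i : Fin K, uR K i * uR K i * (4 * 3 ^ (K - 1)) := by
    apply Finset.sum_congr rfl; intro i _; rw [sum_DR_sq]
  -- the two off-diagonal sums agree
  have hswap : ∑ q ∈ pairsT K,
      (uR K q.2 * uR K q.1 * ∑ c : Fin K → Fin 3, DR c q.2 * DR c q.1)
      = ∑ q ∈ pairsT K,
      (uR K q.1 * uR K q.2 * ∑ c : Fin K → Fin 3, DR c q.1 * DR c q.2) := by
    apply Finset.sum_congr rfl; intro q _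
    rw [show ∑ c : Fin K → Fin 3, DR c q.2 * DR c q.1
        = ∑ c : Fin K → Fin 3, DR c q.1 * DR c q.2 from
      Finset.sum_congr rfl fun c _ => mul_comm _ _]
    ring
  rw [hdiag, hswap]
  -- off-diagonal value
  have hoffval : ∑ q ∈ pairsT K,
      (uR K q.1 * uR K q.2 * ∑ c : Fin K → Fin 3, DR c q.1 * DR c q.2)
      = ∑ q ∈ pairsT K,
        ((uR K q.1 * 3 ^ (q.1 : ℕ)) * (-4 * (uR K q.2 * 3 ^ (K - 1 - (q.2 : ℕ))))) := by
    apply Finset.sum_congr rfl; intro q hq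
    have hlt : q.1 < q.2 := (Finset.mem_filter.1 hq).2
    rw [sum_DR_mul hlt, pow_add]
    ring
  rw [hoffval]
  have hoff2 : ∑ q ∈ pairsT K,
      ((uR K q.1 * 3 ^ (q.1 : ℕ)) * (-4 * (uR K q.2 * 3 ^ (K - 1 - (q.2 : ℕ)))))
      = ∑ j : Fin K, (-4 * (uR K j * 3 ^ (K - 1 - (j : ℕ))))
          * ∑ i ∈ Finset.Iio j, (uR K i * 3 ^ (i : ℕ)) :=
    sum_pairs_mul (fun i => uR K i * 3 ^ (i : ℕ))
      (fun j => -4 * (uR K j * 3 ^ (K - 1 - (j : ℕ))))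
  rw [hoff2]
  -- inner sums
  have hinner : ∀ j : Fin K, (∑ i ∈ Finset.Iio j, (uR K i * 3 ^ (i : ℕ)))
      = (((K : ℝ) + 2 - (j : ℕ)) * 3 ^ (j : ℕ) - ((K : ℝ) + 2)) / (2 * ((K : ℝ) + 2)) := by
    intro j
    have e1 : (∑ i ∈ Finset.Iio j, (uR K i * 3 ^ (i : ℕ)))
        = ∑ m ∈ Finset.range (j : ℕ),
            ((2 * (K : ℝ) + 1 - 2 * m) / (2 * ((K : ℝ) + 2)) * 3 ^ m) :=
      sum_Iio_fin j (fun m => (2 * (K : ℝ) + 1 - 2 * m) / (2 * ((K : ℝ) + 2)) * 3 ^ m)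
    rw [e1]
    have e2 : ∀ m ∈ Finset.range (j : ℕ),
        (2 * (K : ℝ) + 1 - 2 * m) / (2 * ((K : ℝ) + 2)) * 3 ^ m
          = ((2 * (K : ℝ) + 1) - 2 * m) * 3 ^ m / (2 * ((K : ℝ) + 2)) := by
      intro m _; ring
    rw [Finset.sum_congr rfl e2, ← Finset.sum_div, L1]
    field_simp
    ring
  rw [show ∑ j : Fin K, (-4 * (uR K j * 3 ^ (K - 1 - (j : ℕ))))
        * ∑ i ∈ Finset.Iio j, (uR K i * 3 ^ (i : ℕ))
      = ∑ j : Fin K, (-4 * (uR K j * 3 ^ (K - 1 - (j : ℕ))))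
        * ((((K : ℝ) + 2 - (j : ℕ)) * 3 ^ (j : ℕ) - ((K : ℝ) + 2)) / (2 * ((K : ℝ) + 2)))
    from Finset.sum_congr rfl fun j _ => by rw [hinner j]]
  -- now combine everything into a single sum over range K
  set X := ∑ i : Fin K, uR K i * (-2 * 3 ^ (K - 1 - (i : ℕ))) with hX
  set Y := ∑ i : Fin K, uR K i * uR K i * (4 * 3 ^ (K - 1)) with hY
  set W := ∑ j : Fin K, (-4 * (uR K j * 3 ^ (K - 1 - (j : ℕ))))
        * ((((K : ℝ) + 2 - (j : ℕ)) * 3 ^ (j : ℕ) - ((K : ℝ) + 2)) / (2 * ((K : ℝ) + 2)))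
      with hW
  have key : 2 * X + (Y + (W + W))
      = ∑ i : Fin K, (2 * (uR K i * (-2 * 3 ^ (K - 1 - (i : ℕ))))
          + (uR K i * uR K i * (4 * 3 ^ (K - 1))
            + ((-4 * (uR K i * 3 ^ (K - 1 - (i : ℕ))))
              * ((((K : ℝ) + 2 - (i : ℕ)) * 3 ^ (i : ℕ) - ((K : ℝ) + 2)) / (2 * ((K : ℝ) + 2)))
              + (-4 * (uR K i * 3 ^ (K - 1 - (i : ℕ))))
              * ((((K : ℝ) + 2 - (i : ℕ)) * 3 ^ (i : ℕ) - ((K : ℝ) + 2)) / (2 * ((K : ℝ) + 2)))))) := by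
    rw [hX, hY, hW, Finset.mul_sum, ← Finset.sum_add_distrib, ← Finset.sum_add_distrib,
      ← Finset.sum_add_distrib]
  have hpt : ∀ i : Fin K, (2 * (uR K i * (-2 * 3 ^ (K - 1 - (i : ℕ))))
          + (uR K i * uR K i * (4 * 3 ^ (K - 1))
            + ((-4 * (uR K i * 3 ^ (K - 1 - (i : ℕ))))
              * ((((K : ℝ) + 2 - (i : ℕ)) * 3 ^ (i : ℕ) - ((K : ℝ) + 2)) / (2 * ((K : ℝ) + 2)))
              + (-4 * (uR K i * 3 ^ (K - 1 - (i : ℕ))))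
              * ((((K : ℝ) + 2 - (i : ℕ)) * 3 ^ (i : ℕ) - ((K : ℝ) + 2)) / (2 * ((K : ℝ) + 2))))))
      = (-3) * 3 ^ (K - 1) / (((K : ℝ) + 2) ^ 2) * (2 * (K : ℝ) + 1 - 2 * (i : ℕ)) := by
    intro i
    have hQ : ((3 : ℝ)) ^ ((i : ℕ)) ≠ 0 := by positivity
    have hE : (3 : ℝ) ^ (K - 1 - (i : ℕ)) = 3 ^ (K - 1) / 3 ^ ((i : ℕ)) := by
      rw [eq_div_iff hQ, ← pow_add]
      congr 1
      have := i.isLt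
      omega
    rw [hE]
    unfold uR
    field_simp
    ring
  rw [add_assoc, key, Finset.sum_congr rfl (fun i _ => hpt i),
    Fin.sum_univ_eq_sum_range
      (fun m : ℕ => (-3) * 3 ^ (K - 1) / (((K : ℝ) + 2) ^ 2) * (2 * (K : ℝ) + 1 - 2 * m)) K,
    ← Finset.mul_sum, Finset.sum_sub_distrib, Finset.sum_const, Finset.card_range,
    ← Finset.mul_sum, L3, nsmul_eq_mul]
  have h3 : (3 : ℝ) ^ K = 3 ^ (K - 1) * 3 := by
    rw [← pow_succ]
    congr 1
    omega
  rw [h3]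
  field_simp
  ring
end CRW

/-- With `f = -((1/2)f₁ + (1/(K+2))f₂) + K/2` and `B = A - ∇f`,
`‖B‖² = (1/D_K) Σ_{e ∈ E_K} B(e)² = 2/(K+2)`. -/
theorem statement19 (K : ℕ) (hK : 1 ≤ K) :
    let f : (Fin K → ℤ) → ℝ := fun a : Fin K → ℤ =>
      -((1 / 2) * (CRW.f1 K a : ℝ) + (1 / ((K : ℝ) + 2)) * (CRW.f2 K a : ℝ))
        + (K : ℝ) / 2
    let B : CRW.Edge K → ℝ := fun e => CRW.A K e - CRW.gradE K f e
    (∑ e ∈ CRW.EK K, B e ^ 2) / ((CRW.EK K).card : ℝ) = 2 / ((K : ℝ) + 2) := by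
  intro f B
  have h1 : (∑ e ∈ CRW.EK K, B e ^ 2)
      = ∑ e ∈ CRW.EK K, (CRW.A K e - CRW.gradE K f e) ^ 2 := rfl
  rw [h1, CRW.sum_sq_B f, CRW.sum_Eplus_eq (fun p => (1 - (f p.2 - f p.1)) ^ 2)]
  have hper : ∀ c : Fin K → Fin 3,
      (1 - (f (CRW.Phi c).2 - f (CRW.Phi c).1)) ^ 2
        = (1 + ∑ i : Fin K, CRW.uR K i * CRW.DR c i) ^ 2 := by
    intro c
    obtain ⟨ha, hb, -⟩ := CRW.mem_Eplus.1 (CRW.Phi_mem c)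
    have hg : f (CRW.Phi c).2 - f (CRW.Phi c).1
        = -∑ i : Fin K, ((((CRW.Phi c).2 i : ℝ) - ((CRW.Phi c).1 i : ℝ)) * CRW.uR K i) :=
      CRW.grad_formula (CRW.Phi c).1 (CRW.Phi c).2 ha hb
    rw [hg]
    have hsum : ∑ i : Fin K, ((((CRW.Phi c).2 i : ℝ) - ((CRW.Phi c).1 i : ℝ)) * CRW.uR K i)
        = ∑ i : Fin K, CRW.uR K i * CRW.DR c i :=
      Finset.sum_congr rfl fun i _ => by rw [CRW.DR_eq]; ring
    rw [hsum]
    ring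
  rw [Finset.sum_congr rfl (fun c _ => hper c), CRW.T_val hK, CRW.card_EK]
  have h3 : ((3 : ℝ)) ^ K ≠ 0 := by positivity
  have hKne : ((K : ℝ) + 2) ≠ 0 := by positivity
  push_cast
  field_simp
end
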